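/- arXiv:2408.12386 — 12 statements merged into one kernel-verified Lean document; each statement's English description precedes it below -/
import Mathlib

section
/- For integers $0\le k\le a$ and $0\le \ell\le b$ and all real (or complex) $x$, the product of binomial coefficients satisfies $\binom{x+a-k}{a}\cdot\binom{x+b-\ell}{b} = \sum_{i} \binom{a-k+\ell}{i-k}\binom{b-\ell+k}{i-\ell}\binom{x+a+b-i}{a+b}$, where the sum ranges over all integers $i$ (only finitely many terms are nonzero). -/
/-- Polynomial-style binomial coefficient `(x choose n) = x(x-1)⋯(x-n+1)/n!` for real `x`. -/
noncomputable def fallingBinom (x : ℝ) (n : ℕ) : ℝ :=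
  (∏ i ∈ Finset.range n, (x - i)) / n.factorial

/-- Binomial coefficient `(n choose r)` with integer lower index, zero when `r < 0`. -/
noncomputable def chooseZ (n : ℕ) (r : ℤ) : ℝ :=
  if 0 ≤ r then (n.choose r.toNat : ℝ) else 0

/-!
Pascal's rule `C(y + 1, a) = C(y, a) + C(y, a - 1)` splits the left-hand side for `(a, k)` into
those for `(a, k + 1)` and `(a - 1, k)`. On the right, Pascal's rule for the basis
`C(x + a + b - i, a + b)` (a summation by parts) and for the coefficients splits the sums in the
same way; by the symmetry `(a, k) ↔ (b, l)` the same holds in `b`. This reduces everything to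
`k = a`, `l = b`, where `C(x, a) C(x, b) = ∑ C(b, i - a) C(a, i - b) C(x + a + b - i, a + b)`
follows by induction on `a` from `(a + 1) C(x, a + 1) = (x - a) C(x, a)`.
-/

open Finset

lemma fallingBinom_zero (x : ℝ) : fallingBinom x 0 = 1 := by
  simp [fallingBinom]

lemma succ_mul_fallingBinom_succ (x : ℝ) (n : ℕ) :
    ((n : ℝ) + 1) * fallingBinom x (n + 1) = (x - n) * fallingBinom x n := by
  simp only [fallingBinom, prod_range_succ, Nat.factorial_succ]
  push_cast
  field_simp

lemma fallingBinom_add_one_succ (x : ℝ) (n : ℕ) :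
    fallingBinom (x + 1) (n + 1) = fallingBinom x (n + 1) + fallingBinom x n := by
  have hprod : ∏ i ∈ range (n + 1), (x + 1 - i) = (x + 1) * ∏ i ∈ range n, (x - i) := by
    rw [prod_range_succ', mul_comm]
    simp [add_sub_add_right_eq_sub]
  simp only [fallingBinom, prod_range_succ, Nat.factorial_succ, hprod]
  push_cast
  field_simp
  ring

lemma chooseZ_natCast (n m : ℕ) : chooseZ n m = n.choose m := by
  simp [chooseZ]

lemma chooseZ_of_neg (n : ℕ) {r : ℤ} (h : r < 0) : chooseZ n r = 0 := by
  simp [chooseZ, not_le.2 h]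

lemma chooseZ_of_lt (n : ℕ) {r : ℤ} (h : (n : ℤ) < r) : chooseZ n r = 0 := by
  rw [chooseZ, if_pos (by omega), Nat.choose_eq_zero_of_lt (by omega), Nat.cast_zero]

lemma chooseZ_succ (n : ℕ) (r : ℤ) : chooseZ (n + 1) r = chooseZ n r + chooseZ n (r - 1) := by
  rcases lt_or_ge r 1 with hr | hr
  · rcases eq_or_lt_of_le (show r ≤ 0 by omega) with rfl | hr'
    · simp [chooseZ]
    · simp [chooseZ_of_neg _ hr', chooseZ_of_neg _ (show r - 1 < 0 by omega)]
  · obtain ⟨m, rfl⟩ : ∃ m : ℕ, r = (m + 1 : ℕ) := ⟨r.toNat - 1, by omega⟩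
    rw [Nat.cast_succ, add_sub_cancel_right, ← Nat.cast_succ]
    simp only [chooseZ_natCast, Nat.choose_succ_succ, Nat.cast_add, add_comm]

lemma mul_chooseZ (n : ℕ) (r : ℤ) :
    (r : ℝ) * chooseZ n r = ((n : ℝ) - r + 1) * chooseZ n (r - 1) := by
  rcases lt_or_ge r 1 with hr | hr
  · rcases eq_or_lt_of_le (show r ≤ 0 by omega) with rfl | hr'
    · simp [chooseZ]
    · simp [chooseZ_of_neg _ hr', chooseZ_of_neg _ (show r - 1 < 0 by omega)]
  · obtain ⟨m, rfl⟩ : ∃ m : ℕ, r = (m + 1 : ℕ) := ⟨r.toNat - 1, by omega⟩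
    rw [Nat.cast_succ, add_sub_cancel_right, ← Nat.cast_succ]
    simp only [chooseZ_natCast, Int.cast_natCast]
    rcases le_or_gt m n with hm | hm
    · have h := Nat.choose_succ_right_eq n m
      rw [← Nat.cast_inj (R := ℝ)] at h
      push_cast [hm] at h ⊢
      linarith
    · rw [Nat.choose_eq_zero_of_lt hm, Nat.choose_eq_zero_of_lt (by omega)]
      simp

section Reindexing

variable (c : ℤ → ℝ)

lemma sum_range_shift (g : ℝ → ℝ) (hc : c (-1) = 0) (N : ℕ) (y : ℝ) :
    ∑ i ∈ range N, c i * g (y - i) = ∑ i ∈ range (N + 1), c (i - 1) * g (y + 1 - i) := by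
  simp [sum_range_succ', hc, add_sub_add_right_eq_sub]

lemma sum_mul_fallingBinom_eq_sum_succ (n : ℕ) (y : ℝ) (h₀ : c (-1) = 0)
    (hn : c (n + 1) = 0) :
    ∑ i ∈ range (n + 1), c i * fallingBinom (y - i) n =
      ∑ i ∈ range (n + 2), (c i - c (i - 1)) * fallingBinom (y + 1 - i) (n + 1) := by
  have hpascal (i : ℕ) : fallingBinom (y - i) n =
      fallingBinom (y + 1 - i) (n + 1) - fallingBinom (y - i) (n + 1) := by
    rw [add_sub_right_comm, fallingBinom_add_one_succ]
    ring
  have hshift := sum_range_shift c (fallingBinom · (n + 1)) h₀ (n + 1) y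
  beta_reduce at hshift
  simp_rw [hpascal, mul_sub, sub_mul, sum_sub_distrib, ← hshift, sum_range_succ _ (n + 1),
    Nat.cast_succ, hn, zero_mul, add_zero]

lemma sub_mul_sum_mul_fallingBinom (n : ℕ) (t y : ℝ) (h₀ : c (-1) = 0) (hn : c (n + 1) = 0) :
    (y - n - t) * ∑ i ∈ range (n + 1), c i * fallingBinom (y - i) n =
      ∑ i ∈ range (n + 2),
        ((n + 2 + t - i) * c (i - 1) + (i - t) * c i) * fallingBinom (y + 1 - i) (n + 1) := by
  have hsplit (i : ℕ) : (y - n - t) * (c i * fallingBinom (y - i) n) =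
      (n + 1) * c i * fallingBinom (y - i) (n + 1) + (i - t) * c i * fallingBinom (y - i) n := by
    linear_combination -c i * succ_mul_fallingBinom_succ (y - i) n
  have hshift := sum_range_shift (fun i ↦ (n + 1) * c i) (fallingBinom · (n + 1))
    (by simp [h₀]) (n + 1) y
  have hraise := sum_mul_fallingBinom_eq_sum_succ (fun i ↦ (i - t) * c i) n y (by simp [h₀])
    (by simp [hn])
  beta_reduce at hshift hraise
  simp only [Int.cast_natCast] at hraise
  rw [mul_sum, sum_congr rfl fun i _ ↦ hsplit i, sum_add_distrib, hshift, hraise,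
    ← sum_add_distrib]
  refine sum_congr rfl fun i _ ↦ ?_
  push_cast
  ring

end Reindexing

lemma chooseZ_mul_chooseZ_succ_left (a b i : ℕ) :
    ((a : ℝ) + b + 2 + a - i) * (chooseZ b ((i : ℤ) - 1 - a) * chooseZ a ((i : ℤ) - 1 - b)) +
        (i - a) * (chooseZ b ((i : ℤ) - a) * chooseZ a ((i : ℤ) - b)) =
      (a + 1) * (chooseZ b ((i : ℤ) - (a + 1)) * chooseZ (a + 1) ((i : ℤ) - b)) := by
  have habs_b := mul_chooseZ b (i - a)
  have habs_a := mul_chooseZ a (i - b)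
  have hpascal := chooseZ_succ a (i - b)
  rw [sub_right_comm _ (1 : ℤ), sub_right_comm _ (1 : ℤ), ← sub_sub]
  push_cast at habs_a habs_b ⊢
  linear_combination chooseZ a (i - b) * habs_b - chooseZ b (i - a - 1) * habs_a -
    ((a : ℝ) + 1) * chooseZ b (i - a - 1) * hpascal

lemma fallingBinom_mul_fallingBinom (a b : ℕ) (x : ℝ) :
    fallingBinom x a * fallingBinom x b =
      ∑ i ∈ range (a + b + 1),
        chooseZ b ((i : ℤ) - a) * chooseZ a ((i : ℤ) - b) *
          fallingBinom (x + a + b - i) (a + b) := by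
  induction a with
  | zero =>
    rw [sum_eq_single_of_mem b (by simp)]
    · simp [fallingBinom_zero, chooseZ]
    · intro i _ hib
      rcases lt_or_gt_of_ne hib with h | h
      · simp [chooseZ_of_neg 0 (show (i : ℤ) - b < 0 by omega)]
      · simp [chooseZ_of_lt 0 (show ((0 : ℕ) : ℤ) < i - b by omega)]
  | succ a ih =>
    have hx := sub_mul_sum_mul_fallingBinom (fun i ↦ chooseZ b (i - a) * chooseZ a (i - b))
      (a + b) a (x + a + b) (mul_eq_zero_of_left (chooseZ_of_neg b (by omega)) _)
      (mul_eq_zero_of_left (chooseZ_of_lt b (by push_cast; omega)) _)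
    beta_reduce at hx
    push_cast at hx ⊢
    rw [show x + a + b - (a + b) - a = x - a by ring, ← ih] at hx
    rw [Nat.add_right_comm a 1 b]
    apply mul_left_cancel₀ (show (a : ℝ) + 1 ≠ 0 by positivity)
    rw [← mul_assoc, succ_mul_fallingBinom_succ, mul_assoc, hx, mul_sum]
    refine sum_congr rfl fun i _ ↦ ?_
    rw [chooseZ_mul_chooseZ_succ_left, show x + (a + 1) + b - i = x + a + b + 1 - i by ring]
    ring

lemma chooseZ_succ_mul_chooseZ (u v : ℕ) (r s : ℤ) :
    chooseZ (u + 1) r * chooseZ v s = chooseZ u (r - 1) * chooseZ (v + 1) s +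
      (chooseZ u r * chooseZ v s - chooseZ u (r - 1) * chooseZ v (s - 1)) := by
  rw [chooseZ_succ, chooseZ_succ]
  ring

def ProductIdentity (a b k l : ℕ) : Prop :=
  ∀ x : ℝ, fallingBinom (x + a - k) a * fallingBinom (x + b - l) b =
    ∑ i ∈ range (a + b + 1),
      chooseZ (a - k + l) ((i : ℤ) - k) * chooseZ (b - l + k) ((i : ℤ) - l) *
        fallingBinom (x + a + b - i) (a + b)

lemma ProductIdentity.symm {a b k l : ℕ} (h : ProductIdentity a b k l) :
    ProductIdentity b a l k := by
  intro x
  rw [mul_comm, h x, add_comm a b]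
  refine sum_congr rfl fun i _ ↦ ?_
  rw [mul_comm (chooseZ _ _), add_right_comm x]

lemma ProductIdentity.succ_left {a b k l : ℕ} (hk : k ≤ a) (hl : l ≤ b)
    (h₁ : ProductIdentity (a + 1) b (k + 1) l) (h₀ : ProductIdentity a b k l) :
    ProductIdentity (a + 1) b k l := by
  intro x
  have hraise := sum_mul_fallingBinom_eq_sum_succ
    (fun i ↦ chooseZ (a - k + l) (i - k) * chooseZ (b - l + k) (i - l)) (a + b) (x + a + b)
    (mul_eq_zero_of_left (chooseZ_of_neg _ (by omega)) _)
    (mul_eq_zero_of_right _ (chooseZ_of_lt _ (by push_cast; omega)))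
  beta_reduce at hraise
  have h1 := h₁ x
  rw [show a + 1 - (k + 1) + l = a - k + l by omega,
    show b - l + (k + 1) = b - l + k + 1 by omega] at h1
  push_cast at h1 hraise ⊢
  rw [show x + (a + 1) - (k + 1) = x + a - k by ring] at h1
  rw [show a + 1 - k + l = a - k + l + 1 by omega, show x + (a + 1) - k = x + a - k + 1 by ring,
    fallingBinom_add_one_succ, add_mul, h₀ x, h1, hraise, Nat.add_right_comm a 1 b,
    ← sum_add_distrib]
  refine sum_congr rfl fun i _ ↦ ?_
  rw [chooseZ_succ_mul_chooseZ, show x + (a + 1) + b - i = x + a + b + 1 - i by ring]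
  rw [← sub_sub, sub_right_comm _ (1 : ℤ), sub_right_comm _ (1 : ℤ)]
  ring

lemma productIdentity_self (a b : ℕ) : ProductIdentity a b a b := by
  intro x
  simpa only [add_sub_cancel_right, Nat.sub_self, zero_add] using
    fallingBinom_mul_fallingBinom a b x

lemma productIdentity_of_le {a b k l : ℕ} (hk : k ≤ a) (hl : l ≤ b) :
    ProductIdentity a b k l := by
  induction hm : a - k + (b - l) generalizing a b k l with
  | zero =>
    obtain ⟨rfl, rfl⟩ : k = a ∧ l = b := by omega
    exact productIdentity_self k l
  | succ m ih =>
    rcases Nat.lt_or_ge k a with hka | hka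
    · obtain ⟨a, rfl⟩ : ∃ a', a = a' + 1 := ⟨a - 1, by omega⟩
      exact .succ_left (by omega) hl (ih (by omega) hl (by omega)) (ih (by omega) hl (by omega))
    · obtain ⟨b, rfl⟩ : ∃ b', b = b' + 1 := ⟨b - 1, by omega⟩
      exact (ProductIdentity.succ_left (by omega) hk (ih hk (by omega) (by omega)).symm
        (ih hk (by omega) (by omega)).symm).symm

/-- For integers `0 ≤ k ≤ a` and `0 ≤ ℓ ≤ b` and all real `x`,
`C(x+a-k, a) * C(x+b-ℓ, b) = ∑_i C(a-k+ℓ, i-k) C(b-ℓ+k, i-ℓ) C(x+a+b-i, a+b)`,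
where the sum over all integers `i` has nonzero terms only for `0 ≤ i ≤ a+b`. -/
theorem binom_product_identity (a b k l : ℕ) (hk : k ≤ a) (hl : l ≤ b) (x : ℝ) :
    fallingBinom (x + a - k) a * fallingBinom (x + b - l) b =
      ∑ i ∈ Finset.range (a + b + 1),
        chooseZ (a - k + l) ((i : ℤ) - k) * chooseZ (b - l + k) ((i : ℤ) - l) *
          fallingBinom (x + a + b - i) (a + b) :=
  productIdentity_of_le hk hl x
end

section
/- Nanjundiah's identity: for nonnegative integers $m,n,p,q$, $\binom{m}{p}\binom{n}{q} = \sum_{j}\binom{n+j}{p+q}\binom{m-n+q}{j}\binom{n-m+p}{p-j}$, interpreted with generalized binomial coefficients (binomials with possibly negative upper argument). -/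
/-! Work with arbitrary `a, b` in a commutative binomial ring in place of `m, n`, and put
`c = a - b + q`, `d = b - a + p`, so that `c + d = p + q`. Vandermonde expands
`C(b + j, p + q)` as `∑ᵢ C(j, i) C(b, p + q - i)`. For fixed `i`, trinomial revision
`C(j, i) C(c, j) = C(c, i) C(c - i, j - i)` and Vandermonde collapse the sum over `j` to
`C(c, i) C(p + q - i, p - i)`. A second trinomial revision turns
`C(b, p + q - i) C(p + q - i, q)` into `C(b, q) C(b - q, p - i)`, and a last Vandermonde gives
`∑ᵢ C(c, i) C(b - q, p - i) = C(a, p)`. -/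

noncomputable def zchoose (a : ℤ) (k : ℕ) : ℚ :=
  (∏ i ∈ Finset.range k, ((a : ℚ) - i)) / k.factorial

open Finset Polynomial

namespace Ring

variable {R : Type*} [CommRing R] [BinomialRing R]

theorem add_choose_eq_sum_range (r s : R) (n : ℕ) :
    choose (r + s) n = ∑ k ∈ range (n + 1), choose r k * choose s (n - k) := by
  rw [add_choose_eq n (Commute.all r s), Nat.sum_antidiagonal_eq_sum_range_succ_mk]

theorem natCast_choose_mul_choose (r : R) {n k : ℕ} (h : k ≤ n) :
    (n.choose k : R) * choose r n = choose r k * choose (r - k) (n - k) := by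
  rw [← nsmul_eq_mul, choose_smul_choose r h]

theorem sum_range_natCast_choose_mul_choose_mul_choose (c d : R) {i p : ℕ} (hip : i ≤ p) :
    ∑ j ∈ range (p + 1), (j.choose i : R) * (choose c j * choose d (p - j)) =
      choose c i * choose (c - i + d) (p - i) := by
  have below : ∑ j ∈ range i, (j.choose i : R) * (choose c j * choose d (p - j)) = 0 :=
    sum_eq_zero fun j hj => by
      rw [Nat.choose_eq_zero_of_lt (mem_range.1 hj), Nat.cast_zero, zero_mul]
  rw [range_eq_Ico, ← sum_Ico_consecutive _ i.zero_le (by omega : i ≤ p + 1), ← range_eq_Ico,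
    below, zero_add, sum_Ico_eq_sum_range, add_choose_eq_sum_range, mul_sum,
    show p + 1 - i = p - i + 1 by omega]
  refine sum_congr rfl fun t _ => ?_
  rw [← mul_assoc, natCast_choose_mul_choose c (Nat.le_add_right i t), Nat.add_sub_cancel_left,
    Nat.sub_add_eq, mul_assoc]

theorem choose_mul_choose_eq_sum_range (a b : R) (p q : ℕ) :
    choose a p * choose b q =
      ∑ j ∈ range (p + 1),
        choose (b + j) (p + q) * choose (a - b + q) j * choose (b - a + p) (p - j) := by
  set c := a - b + q
  set d := b - a + p
  have expand (j : ℕ) : choose (b + j) (p + q) =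
      ∑ i ∈ range (p + q + 1), (j.choose i : R) * choose b (p + q - i) := by
    rw [add_comm, add_choose_eq_sum_range]
    simp only [choose_natCast]
  have revise {i : ℕ} (hip : i ≤ p) :
      choose b (p + q - i) * (choose c i * choose (c - i + d) (p - i)) =
        choose b q * (choose c i * choose (b - q) (p - i)) := by
    have hcd : c - i + d = ((p + q - i : ℕ) : R) := by
      rw [Nat.cast_sub (by omega)]; push_cast; ring
    rw [hcd, choose_natCast, Nat.choose_symm_of_eq_add (by omega : p + q - i = p - i + q),
      mul_left_comm, mul_comm (choose b _), natCast_choose_mul_choose b (by omega),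
      show p + q - i - q = p - i by omega]
    ring
  symm
  calc ∑ j ∈ range (p + 1), choose (b + j) (p + q) * choose c j * choose d (p - j)
      = ∑ i ∈ range (p + q + 1), choose b (p + q - i) *
          ∑ j ∈ range (p + 1), (j.choose i : R) * (choose c j * choose d (p - j)) := by
        simp_rw [expand, sum_mul, mul_sum]
        rw [sum_comm]
        exact sum_congr rfl fun i _ => sum_congr rfl fun j _ => by ring
    _ = ∑ i ∈ range (p + 1), choose b (p + q - i) *
          ∑ j ∈ range (p + 1), (j.choose i : R) * (choose c j * choose d (p - j)) := by
        refine (sum_subset (range_subset_range.2 (by omega)) fun i _ hi => ?_).symm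
        rw [sum_eq_zero fun j hj => ?_, mul_zero]
        rw [Nat.choose_eq_zero_of_lt (by simp only [mem_range] at hi hj; omega), Nat.cast_zero,
          zero_mul]
    _ = choose b q * ∑ i ∈ range (p + 1), choose c i * choose (b - q) (p - i) := by
        rw [mul_sum]
        refine sum_congr rfl fun i hi => ?_
        have hip : i ≤ p := Nat.lt_succ_iff.1 (mem_range.1 hi)
        rw [sum_range_natCast_choose_mul_choose_mul_choose c d hip, revise hip]
    _ = choose a p * choose b q := by
        rw [← add_choose_eq_sum_range, show c + (b - q) = a by ring, mul_comm]

end Ring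

theorem zchoose_eq_choose (a : ℤ) (k : ℕ) : zchoose a k = Ring.choose (a : ℚ) k := by
  rw [Ring.choose_eq_smul, smul_eq_mul, ← aeval_eq_smeval, aeval_def, eval₂_eq_eval_map,
    descPochhammer_map, descPochhammer_eval_eq_prod_range, zchoose, div_eq_inv_mul]

/-- Nanjundiah's identity: for nonnegative integers `m, n, p, q`,
`C(m,p) C(n,q) = ∑_j C(n+j, p+q) C(m-n+q, j) C(n-m+p, p-j)`.
The sum over all integers `j` has nonzero terms only for `0 ≤ j ≤ p`
(for `j > p` the last factor has negative lower index, hence vanishes). -/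
theorem nanjundiah_identity (m n p q : ℕ) :
    (m.choose p : ℚ) * (n.choose q : ℚ) =
      ∑ j ∈ Finset.range (p + 1),
        zchoose ((n : ℤ) + j) (p + q) * zchoose ((m : ℤ) - n + q) j *
          zchoose ((n : ℤ) - m + p) (p - j) := by
  simp_rw [zchoose_eq_choose, ← Ring.choose_natCast]
  push_cast
  exact Ring.choose_mul_choose_eq_sum_range _ _ p q
end

section
/- Let $p(x_1,\dots,x_n)\in\mathbb{C}[x_1,\dots,x_n]$ be a stable polynomial of degree at most $m$ in the variable $x_1$. Then the polynomial $q(x_1,y_1,x_2,\dots,x_n) = (x_1+y_1)^m\, p\left(\frac{x_1 y_1}{x_1+y_1}, x_2,\dots,x_n\right)$ is stable. -/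
open MvPolynomial

/-- A complex polynomial in several variables is stable if it does not vanish
when all variables lie in the open upper half-plane. -/
def IsStable {σ : Type*} (p : MvPolynomial σ ℂ) : Prop :=
  ∀ z : σ → ℂ, (∀ i, 0 < (z i).im) → eval z p ≠ 0

lemma parallel_sum_im {a b : ℂ} (ha : 0 < a.im) (hb : 0 < b.im) :
    0 < (a * b / (a + b)).im := by
  have ha0 : a ≠ 0 := fun h => by simp [h] at ha
  have hb0 : b ≠ 0 := fun h => by simp [h] at hb
  have hs : a + b ≠ 0 := by
    intro h
    have : (a + b).im = 0 := by rw [h]; simp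
    rw [Complex.add_im] at this; linarith
  have key : a * b / (a + b) = (a⁻¹ + b⁻¹)⁻¹ := by
    rw [inv_add_inv ha0 hb0, inv_div]
  have hua : (a⁻¹).im < 0 := by
    rw [Complex.inv_im]
    exact div_neg_of_neg_of_pos (by linarith) (Complex.normSq_pos.mpr ha0)
  have hub : (b⁻¹).im < 0 := by
    rw [Complex.inv_im]
    exact div_neg_of_neg_of_pos (by linarith) (Complex.normSq_pos.mpr hb0)
  have hu : (a⁻¹ + b⁻¹).im < 0 := by rw [Complex.add_im]; linarith
  have hu0 : a⁻¹ + b⁻¹ ≠ 0 := by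
    intro h
    rw [h] at hu; simp at hu
  rw [key, Complex.inv_im]
  exact div_pos (by linarith) (Complex.normSq_pos.mpr hu0)

/-- If `p(x₁,…,x_{n+1})` is stable and has degree at most `m` in `x₁`, then
`q(x₁,y₁,x₂,…,x_{n+1}) = (x₁+y₁)^m p(x₁y₁/(x₁+y₁), x₂,…,x_{n+1})` is stable.
Here `q` is a polynomial in `n+2` variables (indexing: variable `0` is `x₁`,
variable `1` is `y₁`, and variable `j.succ` of `q` is variable `j` of `p` for
`j ≥ 1`), characterized by the displayed evaluation identity. -/
theorem stable_parallel_sum_substitution (n m : ℕ)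
    (p : MvPolynomial (Fin (n + 1)) ℂ) (hdeg : p.degreeOf 0 ≤ m)
    (hp : IsStable p) (q : MvPolynomial (Fin (n + 2)) ℂ)
    (hq : ∀ z : Fin (n + 2) → ℂ, z 0 + z 1 ≠ 0 →
      eval z q = (z 0 + z 1) ^ m *
        eval (fun j : Fin (n + 1) =>
          if j = 0 then z 0 * z 1 / (z 0 + z 1) else z j.succ) p) :
    IsStable q := by
  intro z hz
  have h0 := hz 0
  have h1 := hz 1
  have hs : z 0 + z 1 ≠ 0 := by
    intro h
    have : (z 0 + z 1).im = 0 := by rw [h]; simp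
    rw [Complex.add_im] at this; linarith
  rw [hq z hs]
  refine mul_ne_zero (pow_ne_zero _ hs) (hp _ ?_)
  intro j
  by_cases hj : j = 0
  · subst hj
    simp only [if_pos rfl]
    exact parallel_sum_im h0 h1
  · simp only [if_neg hj]
    exact hz j.succ
end

section
/- Let $p$ be a polynomial of degree $d$ with $\mathscr{W}(p)(x)=\sum_{i=0}^s h_i x^i$ where $s\le d$. Then $x^s\,\mathscr{W}(p)(1/x)=\mathscr{W}(p)(x)$ (i.e., $h_i=h_{s-i}$ for all $i$) if and only if $(-1)^d p(-(x+d+1-s))=p(x)$ as polynomials. -/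
/-!
The substitution `x ↦ -(x + d + 1 - s)`, scaled by `(-1)^d`, maps `binom (x + d - i) d` to
`binom (x + d - (s - i)) d`, so it turns the expansion of `p` with coefficients `h_i` into the
expansion with coefficients `h_{s-i}`. The polynomials `binom (x + d - i) d`, `i ≤ d`, are linearly
independent, since the `i`-th one vanishes at `x = m < i` and equals `1` at `x = i`; hence the two
expansions agree exactly when `h_i = h_{s-i}`.
-/

open Polynomial

/-- The polynomial `binom (x + d - i) d = (x+d-i)(x+d-i-1)⋯(x+1-i)/d!`. -/
noncomputable def binomPoly (d i : ℕ) : Polynomial ℝ :=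
  Polynomial.C ((d.factorial : ℝ)⁻¹) *
    ∏ j ∈ Finset.range d, (Polynomial.X + Polynomial.C ((d : ℝ) - i - j))

open Finset

lemma eval_binomPoly (d i : ℕ) (x : ℝ) :
    (binomPoly d i).eval x = (d.factorial : ℝ)⁻¹ * ∏ j ∈ range d, (x + d - i - j) := by
  simp only [binomPoly, eval_mul, eval_C, eval_prod, eval_add, eval_X, add_sub_assoc]

lemma binomPoly_eval_self (d m : ℕ) : (binomPoly d m).eval (m : ℝ) = 1 := by
  have hprod : ∏ j ∈ range d, ((m : ℝ) + d - m - j) = d.factorial := by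
    rw [← Nat.descFactorial_self, Nat.descFactorial_eq_prod_range, Nat.cast_prod]
    refine prod_congr rfl fun j hj => ?_
    rw [Nat.cast_sub (mem_range.1 hj).le]
    ring
  rw [eval_binomPoly, hprod, inv_mul_cancel₀ (by positivity)]

lemma binomPoly_eval_of_lt (d : ℕ) {i m : ℕ} (hi : i ≤ d) (hmi : m < i) :
    (binomPoly d i).eval (m : ℝ) = 0 := by
  rw [eval_binomPoly, prod_eq_zero (i := m + d - i) (mem_range.2 (by omega)), mul_zero]
  rw [Nat.cast_sub (by omega)]
  push_cast
  ring

lemma binomPoly_reflect (d : ℕ) {s i : ℕ} (hi : i ≤ s) :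
    C ((-1 : ℝ) ^ d) * (binomPoly d i).comp (-(X + C ((d : ℝ) + 1 - s))) =
      binomPoly d (s - i) := by
  refine Polynomial.funext fun x => ?_
  rw [eval_mul, eval_C, eval_comp, eval_binomPoly, eval_binomPoly, mul_left_comm]
  conv_rhs => rw [← prod_range_reflect]
  rw [show (-1 : ℝ) ^ d = ∏ _j ∈ range d, (-1 : ℝ) by simp, ← prod_mul_distrib]
  congr 1
  refine prod_congr rfl fun j hj => ?_
  have hj : j < d := mem_range.1 hj
  rw [Nat.cast_sub hi, Nat.cast_sub (by omega), Nat.cast_sub (by omega)]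
  simp only [eval_neg, eval_add, eval_X, eval_C, Nat.cast_one]
  ring

/-- The polynomial `p` of degree `d` with `𝒲(p) = h`. -/
noncomputable def binomSum (d : ℕ) (h : ℝ[X]) : ℝ[X] :=
  ∑ i ∈ range (d + 1), C (h.coeff i) * binomPoly d i

lemma binomSum_sub (d : ℕ) (f g : ℝ[X]) :
    binomSum d (f - g) = binomSum d f - binomSum d g := by
  simp only [binomSum, coeff_sub, map_sub, sub_mul, sum_sub_distrib]

lemma eq_zero_of_binomSum_eq_zero {d : ℕ} {h : ℝ[X]} (hd : h.natDegree ≤ d)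
    (h0 : binomSum d h = 0) : h = 0 := by
  suffices ∀ m ≤ d, h.coeff m = 0 by
    ext m
    rcases le_or_gt m d with hm | hm
    · exact this m hm
    · exact coeff_eq_zero_of_natDegree_lt (hd.trans_lt hm)
  intro m
  induction m using Nat.strong_induction_on with
  | _ m ih =>
    intro hm
    have he := congrArg (eval (m : ℝ)) h0
    simp only [binomSum, eval_finsetSum, eval_mul, eval_C, eval_zero] at he
    rwa [sum_eq_single_of_mem m (mem_range.2 (by omega)) fun i hi hne => ?_,
      binomPoly_eval_self, mul_one] at he
    rcases lt_or_gt_of_ne hne with hlt | hgt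
    · rw [ih i hlt (by omega), zero_mul]
    · rw [binomPoly_eval_of_lt d (Nat.lt_succ_iff.1 (mem_range.1 hi)) hgt, mul_zero]

lemma eq_of_binomSum_eq {d : ℕ} {f g : ℝ[X]} (hf : f.natDegree ≤ d) (hg : g.natDegree ≤ d)
    (hfg : binomSum d f = binomSum d g) : f = g :=
  sub_eq_zero.1 <| eq_zero_of_binomSum_eq_zero ((natDegree_sub_le f g).trans (max_le hf hg))
    (by rw [binomSum_sub, hfg, sub_self])

lemma binomSum_eq_sum_range {d s : ℕ} {h : ℝ[X]} (hs : h.natDegree ≤ s) (hsd : s ≤ d) :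
    binomSum d h = ∑ i ∈ range (s + 1), C (h.coeff i) * binomPoly d i := by
  refine (sum_subset (range_subset_range.2 (by omega)) fun i hi hni => ?_).symm
  rw [coeff_eq_zero_of_natDegree_lt (hs.trans_lt (by rw [mem_range] at hni; omega)), map_zero,
    zero_mul]

lemma natDegree_reflect_le_of_le {s : ℕ} {h : ℝ[X]} (hs : h.natDegree ≤ s) :
    (reflect s h).natDegree ≤ s :=
  natDegree_reflect_le.trans (max_le le_rfl hs)

lemma binomSum_comp_reflect {d s : ℕ} {h : ℝ[X]} (hs : h.natDegree ≤ s) (hsd : s ≤ d) :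
    C ((-1 : ℝ) ^ d) * (binomSum d h).comp (-(X + C ((d : ℝ) + 1 - s))) =
      binomSum d (reflect s h) := by
  rw [binomSum_eq_sum_range hs hsd, binomSum_eq_sum_range (natDegree_reflect_le_of_le hs) hsd,
    Polynomial.sum_comp, mul_sum, ← sum_range_reflect]
  refine sum_congr rfl fun i hi => ?_
  have hi : i ≤ s := Nat.lt_succ_iff.1 (mem_range.1 hi)
  rw [show s + 1 - 1 - i = s - i by omega, mul_comp, C_comp, mul_left_comm,
    binomPoly_reflect d (Nat.sub_le s i), Nat.sub_sub_self hi, coeff_reflect, revAt_le hi]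

lemma reflect_eq_self_iff {s : ℕ} {h : ℝ[X]} :
    reflect s h = h ↔ ∀ i ≤ s, h.coeff i = h.coeff (s - i) := by
  refine ⟨fun hr i hi => by rw [← revAt_le hi, ← coeff_reflect, hr], fun hsym => ?_⟩
  ext i
  rw [coeff_reflect]
  rcases le_or_gt i s with hi | hi
  · rw [revAt_le hi, hsym i hi]
  · rw [revAt_eq_self_of_lt hi]

theorem W_symmetric_iff_reciprocity_general (p h : Polynomial ℝ) (d s : ℕ)
    (hsd : s ≤ d) (hs : h.natDegree ≤ s)
    (hW : p = ∑ i ∈ Finset.range (d + 1), Polynomial.C (h.coeff i) * binomPoly d i) :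
    (∀ i ≤ s, h.coeff i = h.coeff (s - i)) ↔
      Polynomial.C ((-1 : ℝ) ^ d) *
        p.comp (-(Polynomial.X + Polynomial.C ((d : ℝ) + 1 - s))) = p := by
  change p = binomSum d h at hW
  rw [hW, binomSum_comp_reflect hs hsd, ← reflect_eq_self_iff]
  exact ⟨congrArg (binomSum d), eq_of_binomSum_eq
    ((natDegree_reflect_le_of_le hs).trans hsd) (hs.trans hsd)⟩

/-- Let `p` have degree `d` and `h = 𝒲(p)`, i.e. `p = ∑_{i=0}^d h_i (x+d-i choose d)`,
with `deg h ≤ s ≤ d`.  Then `h` is symmetric, `x^s h(1/x) = h(x)` (i.e.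
`h_i = h_{s-i}` for all `i ≤ s`), if and only if
`(-1)^d p(-(x+d+1-s)) = p(x)` as polynomials. -/
theorem W_symmetric_iff_reciprocity (p h : Polynomial ℝ) (d s : ℕ)
    (hd : p.natDegree = d) (hsd : s ≤ d) (hs : h.natDegree ≤ s)
    (hW : p = ∑ i ∈ Finset.range (d + 1), Polynomial.C (h.coeff i) * binomPoly d i) :
    (∀ i ≤ s, h.coeff i = h.coeff (s - i)) ↔
      Polynomial.C ((-1 : ℝ) ^ d) *
        p.comp (-(Polynomial.X + Polynomial.C ((d : ℝ) + 1 - s))) = p :=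
  W_symmetric_iff_reciprocity_general p h d s hsd hs hW
end

section
/- The polynomial $f(x)=x^6+8x^5+24x^4+36x^3+24x^2+8x+1$ is symmetric with center $3$, is ultra log-concave of order $6$ with no internal zeros, and its $\gamma$-polynomial is $\gamma_f(x)=2x^3+x^2+2x+1$, which has nonnegative coefficients but is not unimodal (hence not log-concave). -/
open Polynomial

/-- Ultra log-concavity of order `m`. -/
def UltraLogConcave (m : ℕ) (a : Polynomial ℝ) : Prop :=
  ∀ j, 1 ≤ j → j ≤ m - 1 →
    (a.coeff (j - 1) / (m.choose (j - 1) : ℝ)) *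
      (a.coeff (j + 1) / (m.choose (j + 1) : ℝ)) ≤
    (a.coeff j / (m.choose j : ℝ)) ^ 2

/-- No internal zeros. -/
def NoInternalZeros (a : Polynomial ℝ) : Prop :=
  ¬ ∃ i j k, i < j ∧ j < k ∧ a.coeff j = 0 ∧ a.coeff i * a.coeff k ≠ 0

/-- Unimodality of the coefficient sequence. -/
def Unimodal (a : Polynomial ℝ) : Prop :=
  ∃ k, (∀ i < k, a.coeff i ≤ a.coeff (i + 1)) ∧ ∀ i, k ≤ i → a.coeff (i + 1) ≤ a.coeff i

/-- Log-concavity of the coefficient sequence. -/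
def LogConcaveCoeffs (a : Polynomial ℝ) : Prop :=
  ∀ j, 1 ≤ j → a.coeff (j - 1) * a.coeff (j + 1) ≤ a.coeff j ^ 2

/-!
Symmetry of degree `d` is `reflect d f = f`. Each `X ^ i * (1 + X) ^ (d - 2 * i)` is symmetric,
so the `γ`-expansion `f = 1 * (1 + X) ^ 6 + 2 * X * (1 + X) ^ 4 + X ^ 2 * (1 + X) ^ 2 + 2 * X ^ 3`
shows that `f` is. Dividing the coefficients of `f` by `choose 6 j` gives
`1, 4/3, 8/5, 9/5, 8/5, 4/3, 1`, which is log-concave. The `γ`-coefficients `1, 2, 1, 2` dip at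
index `2`; a dip between positive neighbours rules out unimodality and, since `1 ^ 2 < 2 * 2`,
log-concavity.
-/

section Reflect

variable {R : Type*} [Semiring R]

theorem natDegree_one_add_X_pow_le (m : ℕ) : ((1 + X : R[X]) ^ m).natDegree ≤ m :=
  (natDegree_pow_le_of_le m (by compute_degree)).trans_eq (mul_one m)

theorem reflect_one_add_X_pow (m : ℕ) : reflect m ((1 + X : R[X]) ^ m) = (1 + X) ^ m := by
  induction m with
  | zero => simp
  | succ m ih =>
    rw [pow_succ, reflect_mul _ _ (natDegree_one_add_X_pow_le m) (by compute_degree), ih,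
      reflect_add, reflect_one, reflect_one_X, pow_one, add_comm X]

theorem reflect_X_pow_mul_one_add_X_pow (i m : ℕ) :
    reflect (2 * i + m) (X ^ i * (1 + X : R[X]) ^ m) = X ^ i * (1 + X) ^ m := by
  have hX : (X ^ i : R[X]).natDegree ≤ 2 * i := natDegree_X_pow_le i |>.trans (by omega)
  rw [reflect_mul _ _ hX (natDegree_one_add_X_pow_le m), reflect_monomial, reflect_one_add_X_pow,
    revAt_le (by omega)]
  congr 2
  omega

theorem reflect_gamma_expansion (d : ℕ) (γ : ℕ → R) :
    reflect d (∑ i ∈ Finset.range (d / 2 + 1), C (γ i) * X ^ i * (1 + X) ^ (d - 2 * i)) =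
      ∑ i ∈ Finset.range (d / 2 + 1), C (γ i) * X ^ i * (1 + X) ^ (d - 2 * i) := by
  refine Finset.sum_induction _ (fun p => reflect d p = p) (fun p q hp hq => ?_) (by simp)
    fun i hi => ?_
  · rw [reflect_add, hp, hq]
  · have hsym := reflect_X_pow_mul_one_add_X_pow (R := R) i (d - 2 * i)
    have hi : 2 * i ≤ d := by
      have := Finset.mem_range.1 hi
      omega
    rw [Nat.add_sub_cancel' hi] at hsym
    rw [mul_assoc, reflect_C_mul, hsym]

theorem coeff_eq_coeff_sub_of_reflect_eq {n i : ℕ} {p : R[X]} (h : reflect n p = p)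
    (hi : i ≤ n) : p.coeff i = p.coeff (n - i) := by
  rw [← revAt_le hi, ← coeff_reflect, h]

end Reflect

theorem noInternalZeros_of_coeff_ne_zero {a : ℝ[X]} (h : ∀ j ≤ a.natDegree, a.coeff j ≠ 0) :
    NoInternalZeros a := by
  rintro ⟨i, j, k, -, hjk, hj, hik⟩
  have hk : a.natDegree < k := by
    by_contra! hk
    exact h j (by omega) hj
  simp [coeff_eq_zero_of_natDegree_lt hk] at hik

theorem not_unimodal_of_dip {a : ℝ[X]} {i : ℕ} (hl : a.coeff (i + 1) < a.coeff i)
    (hr : a.coeff (i + 1) < a.coeff (i + 2)) : ¬ Unimodal a := by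
  rintro ⟨k, hinc, hdec⟩
  rcases lt_or_ge i k with hik | hki
  · exact (hinc i hik).not_gt hl
  · exact (hdec (i + 1) (by omega)).not_gt hr

theorem not_logConcaveCoeffs_of_dip {a : ℝ[X]} {i : ℕ} (h0 : 0 ≤ a.coeff (i + 1))
    (hl : a.coeff (i + 1) < a.coeff i) (hr : a.coeff (i + 1) < a.coeff (i + 2)) :
    ¬ LogConcaveCoeffs a := by
  intro h
  have := h (i + 1) (by omega)
  simp only [Nat.add_sub_cancel, add_assoc, Nat.reduceAdd] at this
  nlinarith

/-- The polynomial `f(x) = x^6+8x^5+24x^4+36x^3+24x^2+8x+1` is symmetric with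
center `3`, ultra log-concave of order `6` with no internal zeros, and its
`γ`-polynomial is `γ_f(x) = 2x^3+x^2+2x+1`, which has nonnegative coefficients
but is not unimodal (hence not log-concave). -/
theorem example_ulc_but_gamma_not_unimodal :
    ∀ f g : Polynomial ℝ,
      f = Polynomial.X ^ 6 + 8 * Polynomial.X ^ 5 + 24 * Polynomial.X ^ 4 +
        36 * Polynomial.X ^ 3 + 24 * Polynomial.X ^ 2 + 8 * Polynomial.X + 1 →
      g = 2 * Polynomial.X ^ 3 + Polynomial.X ^ 2 + 2 * Polynomial.X + 1 →
      (∀ i ≤ 6, f.coeff i = f.coeff (6 - i)) ∧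
      UltraLogConcave 6 f ∧ NoInternalZeros f ∧
      f = ∑ i ∈ Finset.range 4,
        Polynomial.C (g.coeff i) * Polynomial.X ^ i * (1 + Polynomial.X) ^ (6 - 2 * i) ∧
      (∀ j, 0 ≤ g.coeff j) ∧ ¬ Unimodal g ∧ ¬ LogConcaveCoeffs g := by
  intro f g hf hg
  have hγ : f = ∑ i ∈ Finset.range 4, C (g.coeff i) * X ^ i * (1 + X) ^ (6 - 2 * i) := by
    simp only [Finset.sum_range_succ, Finset.sum_range_zero, hf, hg]
    norm_num [coeff_X, coeff_one, map_ofNat]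
    ring
  obtain ⟨hg1, hg2, hg3⟩ : g.coeff 1 = 2 ∧ g.coeff 2 = 1 ∧ g.coeff 3 = 2 := by
    simp [hg, coeff_X, coeff_one]
  refine ⟨fun i hi => coeff_eq_coeff_sub_of_reflect_eq (hγ ▸ reflect_gamma_expansion 6 _) hi,
    ?_, ?_, hγ, ?_, not_unimodal_of_dip (i := 1) (by linarith) (by linarith),
    not_logConcaveCoeffs_of_dip (i := 1) (by linarith) (by linarith) (by linarith)⟩
  · intro j h1 h2
    interval_cases j <;> norm_num [hf, coeff_X, coeff_one, Nat.choose]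
  · have hdeg : f.natDegree = 6 := by rw [hf]; compute_degree!
    refine noInternalZeros_of_coeff_ne_zero fun j hj => ?_
    rw [hdeg] at hj
    interval_cases j <;> norm_num [hf, coeff_X, coeff_one]
  · intro j
    simp only [hg, coeff_add, coeff_ofNat_mul, coeff_X_pow, coeff_X, coeff_one]
    positivity
end

section
/- Let $p(x)=\frac{1}{720}(2x^6+24x^5+170x^4+720x^3+1628x^2+1776x+720)$ and $q(x)=\frac{1}{6}(x^3+6x^2+11x+6)$. Then $\mathscr{W}(p)(x)=x^3+1$, $\mathscr{W}(q)(x)=1$, and $\mathscr{W}(pq)(x)=x^6+18x^5+45x^4+40x^3+45x^2+18x+1$, which is not unimodal. -/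
open Polynomial PowerSeries

lemma cast6 (n : ℕ) : ((Nat.choose (6 + n) 6 : ℕ) : ℝ) =
    ((n:ℝ)+1)*((n:ℝ)+2)*((n:ℝ)+3)*((n:ℝ)+4)*((n:ℝ)+5)*((n:ℝ)+6)/720 := by
  have h := Nat.ascFactorial_eq_factorial_mul_choose n 6
  have h' := congrArg (fun t : ℕ => (t : ℝ)) h
  simp [Nat.ascFactorial_succ, Nat.factorial] at h'
  rw [show 6 + n = n + 6 from Nat.add_comm 6 n]
  field_simp
  linarith [h']

lemma cast3 (n : ℕ) : ((Nat.choose (3 + n) 3 : ℕ) : ℝ) =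
    ((n:ℝ)+1)*((n:ℝ)+2)*((n:ℝ)+3)/6 := by
  have h := Nat.ascFactorial_eq_factorial_mul_choose n 3
  have h' := congrArg (fun t : ℕ => (t : ℝ)) h
  simp [Nat.ascFactorial_succ, Nat.factorial] at h'
  rw [show 3 + n = n + 3 from Nat.add_comm 3 n]
  field_simp
  linarith [h']

lemma cast9 (n : ℕ) : ((Nat.choose (9 + n) 9 : ℕ) : ℝ) =
    ((n:ℝ)+1)*((n:ℝ)+2)*((n:ℝ)+3)*((n:ℝ)+4)*((n:ℝ)+5)*((n:ℝ)+6)*((n:ℝ)+7)*((n:ℝ)+8)*((n:ℝ)+9)/362880 := by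
  have h := Nat.ascFactorial_eq_factorial_mul_choose n 9
  have h' := congrArg (fun t : ℕ => (t : ℝ)) h
  simp [Nat.ascFactorial_succ, Nat.factorial] at h'
  rw [show 9 + n = n + 9 from Nat.add_comm 9 n]
  field_simp
  linarith [h']

/-- With `p = (2x^6+24x^5+170x^4+720x^3+1628x^2+1776x+720)/720` and
`q = (x^3+6x^2+11x+6)/6`, one has `𝒲(p) = x^3+1`, `𝒲(q) = 1`, and
`𝒲(pq) = x^6+18x^5+45x^4+40x^3+45x^2+18x+1`, which is not unimodal.
Here `𝒲(r)` for `r` of degree `d` is the numerator of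
`∑_{j≥0} r(j) x^j = 𝒲(r)(x)/(1-x)^{d+1}`. -/
theorem W_unimodality_not_preserved (p q : Polynomial ℝ)
    (hp : p = Polynomial.C (720⁻¹ : ℝ) *
      (2 * Polynomial.X ^ 6 + 24 * Polynomial.X ^ 5 + 170 * Polynomial.X ^ 4 +
        720 * Polynomial.X ^ 3 + 1628 * Polynomial.X ^ 2 + 1776 * Polynomial.X + 720))
    (hq : q = Polynomial.C (6⁻¹ : ℝ) *
      (Polynomial.X ^ 3 + 6 * Polynomial.X ^ 2 + 11 * Polynomial.X + 6)) :
    (PowerSeries.mk fun j => p.eval (j : ℝ)) * (1 - PowerSeries.X) ^ 7 =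
      ((Polynomial.X ^ 3 + 1 : Polynomial ℝ) : PowerSeries ℝ) ∧
    (PowerSeries.mk fun j => q.eval (j : ℝ)) * (1 - PowerSeries.X) ^ 4 =
      ((1 : Polynomial ℝ) : PowerSeries ℝ) ∧
    (PowerSeries.mk fun j => (p * q).eval (j : ℝ)) * (1 - PowerSeries.X) ^ 10 =
      ((Polynomial.X ^ 6 + 18 * Polynomial.X ^ 5 + 45 * Polynomial.X ^ 4 +
        40 * Polynomial.X ^ 3 + 45 * Polynomial.X ^ 2 + 18 * Polynomial.X + 1 :
        Polynomial ℝ) : PowerSeries ℝ) ∧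
    ¬ Unimodal (Polynomial.X ^ 6 + 18 * Polynomial.X ^ 5 + 45 * Polynomial.X ^ 4 +
        40 * Polynomial.X ^ 3 + 45 * Polynomial.X ^ 2 + 18 * Polynomial.X + 1) := by
  have hg6 : (PowerSeries.mk fun n => ((Nat.choose (6 + n) 6 : ℕ) : ℝ)) * (1 - PowerSeries.X) ^ 7 = 1 := by
    simpa using PowerSeries.mk_add_choose_mul_one_sub_pow_eq_one ℝ 6
  have hg3 : (PowerSeries.mk fun n => ((Nat.choose (3 + n) 3 : ℕ) : ℝ)) * (1 - PowerSeries.X) ^ 4 = 1 := by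
    simpa using PowerSeries.mk_add_choose_mul_one_sub_pow_eq_one ℝ 3
  have hg9 : (PowerSeries.mk fun n => ((Nat.choose (9 + n) 9 : ℕ) : ℝ)) * (1 - PowerSeries.X) ^ 10 = 1 := by
    simpa using PowerSeries.mk_add_choose_mul_one_sub_pow_eq_one ℝ 9
  refine ⟨?_, ?_, ?_, ?_⟩
  · have hd : (PowerSeries.mk fun j => p.eval (j : ℝ)) =
        (1 + PowerSeries.X ^ 3) * (PowerSeries.mk fun n => ((Nat.choose (6 + n) 6 : ℕ) : ℝ)) := by
      ext n
      rw [coeff_mk, add_mul, one_mul, map_add, coeff_mk, PowerSeries.coeff_X_pow_mul']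
      by_cases h3 : 3 ≤ n
      · obtain ⟨m, rfl⟩ : ∃ m, n = m + 3 := ⟨n - 3, by omega⟩
        rw [if_pos h3, show m + 3 - 3 = m from by omega, coeff_mk, cast6, cast6]
        simp only [hp]
        simp only [eval_mul, eval_add, eval_pow, eval_C, eval_X, eval_ofNat]
        push_cast
        ring
      · rw [if_neg h3]
        interval_cases n <;> norm_num [hp, cast6, Nat.choose]
    rw [hd, mul_assoc, hg6, mul_one]
    simp only [Polynomial.coe_add, Polynomial.coe_pow, Polynomial.coe_X, Polynomial.coe_one]
    ring
  · have hd : (PowerSeries.mk fun j => q.eval (j : ℝ)) =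
        (PowerSeries.mk fun n => ((Nat.choose (3 + n) 3 : ℕ) : ℝ)) := by
      ext n
      rw [coeff_mk, coeff_mk, cast3]
      simp only [hq]
      simp only [eval_mul, eval_add, eval_pow, eval_C, eval_X, eval_ofNat]
      ring
    rw [hd, hg3]
    simp
  · have hd : (PowerSeries.mk fun j => (p * q).eval (j : ℝ)) =
        (1 + PowerSeries.C (R := ℝ) 18 * PowerSeries.X ^ 1 + PowerSeries.C (R := ℝ) 45 * PowerSeries.X ^ 2 +
         PowerSeries.C (R := ℝ) 40 * PowerSeries.X ^ 3 + PowerSeries.C (R := ℝ) 45 * PowerSeries.X ^ 4 +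
         PowerSeries.C (R := ℝ) 18 * PowerSeries.X ^ 5 + PowerSeries.X ^ 6) *
        (PowerSeries.mk fun n => ((Nat.choose (9 + n) 9 : ℕ) : ℝ)) := by
      ext n
      rw [coeff_mk]
      simp only [add_mul, one_mul, mul_assoc, map_add, PowerSeries.coeff_C_mul, PowerSeries.coeff_X_pow_mul', coeff_mk]
      by_cases h6 : 6 ≤ n
      · obtain ⟨m, rfl⟩ : ∃ m, n = m + 6 := ⟨n - 6, by omega⟩
        rw [if_pos (by omega : 1 ≤ m + 6), if_pos (by omega : 2 ≤ m + 6),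
          if_pos (by omega : 3 ≤ m + 6), if_pos (by omega : 4 ≤ m + 6),
          if_pos (by omega : 5 ≤ m + 6), if_pos h6,
          show m + 6 - 1 = m + 5 from by omega, show m + 6 - 2 = m + 4 from by omega,
          show m + 6 - 3 = m + 3 from by omega, show m + 6 - 4 = m + 2 from by omega,
          show m + 6 - 5 = m + 1 from by omega, show m + 6 - 6 = m from by omega,
          cast9, cast9, cast9, cast9, cast9, cast9, cast9]
        simp only [hp, hq]
        simp only [eval_mul, eval_add, eval_pow, eval_C, eval_X, eval_ofNat]
        push_cast
        ring
      · interval_cases n <;>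
          norm_num [hp, hq, cast9, Nat.choose]
    rw [hd, mul_assoc, hg9, mul_one]
    have e18 : ((18 : Polynomial ℝ) : PowerSeries ℝ) = PowerSeries.C (R := ℝ) 18 := by
      rw [show (18 : Polynomial ℝ) = Polynomial.C (18 : ℝ) from (map_ofNat _ _).symm,
        Polynomial.coe_C]
    have e45 : ((45 : Polynomial ℝ) : PowerSeries ℝ) = PowerSeries.C (R := ℝ) 45 := by
      rw [show (45 : Polynomial ℝ) = Polynomial.C (45 : ℝ) from (map_ofNat _ _).symm,
        Polynomial.coe_C]
    have e40 : ((40 : Polynomial ℝ) : PowerSeries ℝ) = PowerSeries.C (R := ℝ) 40 := by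
      rw [show (40 : Polynomial ℝ) = Polynomial.C (40 : ℝ) from (map_ofNat _ _).symm,
        Polynomial.coe_C]
    simp only [Polynomial.coe_add, Polynomial.coe_pow, Polynomial.coe_X, Polynomial.coe_one,
      Polynomial.coe_mul, e18, e45, e40]
    ring
  · rintro ⟨k, hinc, hdec⟩
    set A : Polynomial ℝ := Polynomial.X ^ 6 + 18 * Polynomial.X ^ 5 + 45 * Polynomial.X ^ 4 +
        40 * Polynomial.X ^ 3 + 45 * Polynomial.X ^ 2 + 18 * Polynomial.X + 1 with hA
    have e18 : (18 : Polynomial ℝ) = Polynomial.C (18 : ℝ) := (map_ofNat Polynomial.C 18).symm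
    have e45 : (45 : Polynomial ℝ) = Polynomial.C (45 : ℝ) := (map_ofNat Polynomial.C 45).symm
    have e40 : (40 : Polynomial ℝ) = Polynomial.C (40 : ℝ) := (map_ofNat Polynomial.C 40).symm
    have c2 : A.coeff 2 = 45 := by
      simp [hA, e18, e45, e40, Polynomial.coeff_add, Polynomial.coeff_C_mul,
        Polynomial.coeff_X_pow, Polynomial.coeff_one, Polynomial.coeff_X]
    have c3 : A.coeff 3 = 40 := by
      simp [hA, e18, e45, e40, Polynomial.coeff_add, Polynomial.coeff_C_mul,
        Polynomial.coeff_X_pow, Polynomial.coeff_one, Polynomial.coeff_X]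
    have c4 : A.coeff 4 = 45 := by
      simp [hA, e18, e45, e40, Polynomial.coeff_add, Polynomial.coeff_C_mul,
        Polynomial.coeff_X_pow, Polynomial.coeff_one, Polynomial.coeff_X]
    rcases le_or_gt k 3 with h | h
    · have := hdec 3 h
      rw [c3] at this
      rw [show (3:ℕ)+1 = 4 from rfl, c4] at this
      linarith
    · have := hinc 2 (by omega)
      rw [c2, show (2:ℕ)+1 = 3 from rfl, c3] at this
      linarith
end

section
/- For every polynomial $h\in\mathbb{R}[x]$ of degree at most $d$, there exist unique polynomials $a,b\in\mathbb{R}[x]$ such that $h(x)=a(x)+x\,b(x)$, $x^d a(1/x)=a(x)$, and $x^{d-1}b(1/x)=b(x)$ (where $a$ has degree at most $d$ and $b$ degree at most $d-1$). -/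
open Polynomial

namespace SymmDecompAux

/-- Coefficients of the palindromic part `a`. -/
noncomputable def A (F : ℕ → ℝ) (d i : ℕ) : ℝ :=
  ∑ j ∈ Finset.range (i + 1), (F j - F (d + 1 - j))

/-- Coefficients of the palindromic part `b`. -/
noncomputable def B (F : ℕ → ℝ) (d i : ℕ) : ℝ :=
  ∑ j ∈ Finset.range (i + 1), (F (d - j) - F j)

lemma A_succ (F : ℕ → ℝ) (d i : ℕ) :
    A F d (i + 1) = A F d i + (F (i + 1) - F (d - i)) := by
  unfold A
  rw [Finset.sum_range_succ, show d + 1 - (i + 1) = d - i from by omega]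

lemma B_succ (F : ℕ → ℝ) (d i : ℕ) :
    B F d (i + 1) = B F d i + (F (d - (i + 1)) - F (i + 1)) := by
  unfold B
  rw [Finset.sum_range_succ]

lemma AB (F : ℕ → ℝ) (d : ℕ) (hF : F (d + 1) = 0) :
    ∀ i ≤ d, A F d i + B F d i = F (d - i) := by
  intro i
  induction i with
  | zero =>
    intro _
    unfold A B
    simp [Finset.sum_range_one, hF]
  | succ i ih =>
    intro hid
    rw [A_succ, B_succ]
    have h1 := ih (by omega)
    linarith

lemma A_symm_half (F : ℕ → ℝ) (d i : ℕ) (hle : 2 * i ≤ d) :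
    A F d (d - i) = A F d i := by
  have h1 : A F d (d - i) = A F d i +
      ∑ j ∈ Finset.Ico (i + 1) (d - i + 1), (F j - F (d + 1 - j)) := by
    unfold A
    simp only [Finset.range_eq_Ico]
    exact (Finset.sum_Ico_consecutive (fun j => F j - F (d + 1 - j))
        (Nat.zero_le (i + 1)) (by omega : i + 1 ≤ d - i + 1)).symm
  have h2 : ∑ j ∈ Finset.Ico (i + 1) (d - i + 1), (F j - F (d + 1 - j)) = 0 := by
    apply Finset.sum_involution (fun j _ => d + 1 - j)
    · intro j hj
      simp only [Finset.mem_Ico] at hj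
      rw [show d + 1 - (d + 1 - j) = j from by omega]
      ring
    · intro j hj hne heq
      exact hne (by rw [heq]; ring)
    · intro j hj
      simp only [Finset.mem_Ico] at hj ⊢
      omega
    · intro j hj
      simp only [Finset.mem_Ico] at hj
      omega
  rw [h1, h2, add_zero]

lemma A_symm (F : ℕ → ℝ) (d : ℕ) : ∀ i ≤ d, A F d i = A F d (d - i) := by
  intro i hid
  rcases le_or_gt (2 * i) d with H | H
  · exact (A_symm_half F d i H).symm
  · have h2 : 2 * (d - i) ≤ d := by omega
    have := A_symm_half F d (d - i) h2
    rwa [show d - (d - i) = i from by omega] at this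

lemma B_symm_half (F : ℕ → ℝ) (d i : ℕ) (hle : 2 * i + 1 ≤ d) :
    B F d (d - 1 - i) = B F d i := by
  have h1 : B F d (d - 1 - i) = B F d i +
      ∑ j ∈ Finset.Ico (i + 1) (d - 1 - i + 1), (F (d - j) - F j) := by
    unfold B
    simp only [Finset.range_eq_Ico]
    exact (Finset.sum_Ico_consecutive (fun j => F (d - j) - F j)
        (Nat.zero_le (i + 1)) (by omega : i + 1 ≤ d - 1 - i + 1)).symm
  have h2 : ∑ j ∈ Finset.Ico (i + 1) (d - 1 - i + 1), (F (d - j) - F j) = 0 := by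
    apply Finset.sum_involution (fun j _ => d - j)
    · intro j hj
      simp only [Finset.mem_Ico] at hj
      rw [show d - (d - j) = j from by omega]
      ring
    · intro j hj hne heq
      exact hne (by rw [heq]; ring)
    · intro j hj
      simp only [Finset.mem_Ico] at hj ⊢
      omega
    · intro j hj
      simp only [Finset.mem_Ico] at hj
      omega
  rw [h1, h2, add_zero]

lemma B_symm (F : ℕ → ℝ) (d : ℕ) : ∀ i ≤ d - 1, B F d i = B F d (d - 1 - i) := by
  intro i hid
  rcases Nat.eq_zero_or_pos d with rfl | hd
  · have : i = 0 := by omega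
    subst this
    rfl
  rcases le_or_gt (2 * i + 1) d with H | H
  · exact (B_symm_half F d i H).symm
  · have h2 : 2 * (d - 1 - i) + 1 ≤ d := by omega
    have := B_symm_half F d (d - 1 - i) h2
    rwa [show d - 1 - (d - 1 - i) = i from by omega] at this

/-- Build a polynomial from finitely many coefficients. -/
noncomputable def mkPoly (n : ℕ) (f : ℕ → ℝ) : Polynomial ℝ :=
  ∑ i ∈ Finset.range n, Polynomial.monomial i (f i)

lemma mkPoly_coeff (n : ℕ) (f : ℕ → ℝ) (k : ℕ) :
    (mkPoly n f).coeff k = if k < n then f k else 0 := by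
  unfold mkPoly
  rw [Polynomial.finset_sum_coeff]
  simp only [Polynomial.coeff_monomial]
  rw [Finset.sum_ite_eq']
  simp [Finset.mem_range]

lemma mkPoly_natDegree_le (n : ℕ) (f : ℕ → ℝ) : (mkPoly n f).natDegree ≤ n - 1 := by
  rw [Polynomial.natDegree_le_iff_coeff_eq_zero]
  intro N hN
  rw [mkPoly_coeff, if_neg (by omega)]

end SymmDecompAux

open SymmDecompAux

/-- Every polynomial `h` of degree at most `d` has a unique symmetric
decomposition `h = a + x b` with `a` palindromic with respect to `d`
(`x^d a(1/x) = a(x)`, i.e. `a_i = a_{d-i}`) and `b` palindromic with respect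
to `d-1`. -/
theorem symmetric_decomposition (d : ℕ) (h : Polynomial ℝ) (hh : h.natDegree ≤ d) :
    ∃! ab : Polynomial ℝ × Polynomial ℝ,
      h = ab.1 + Polynomial.X * ab.2 ∧
      ab.1.natDegree ≤ d ∧ ab.2.natDegree ≤ d - 1 ∧
      (∀ i ≤ d, ab.1.coeff i = ab.1.coeff (d - i)) ∧
      (∀ i ≤ d - 1, ab.2.coeff i = ab.2.coeff (d - 1 - i)) := by
  have hF : ∀ k, d < k → h.coeff k = 0 := fun k hk =>
    Polynomial.coeff_eq_zero_of_natDegree_lt (lt_of_le_of_lt hh hk)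
  have hFd1 : h.coeff (d + 1) = 0 := hF _ (by omega)
  have hA0 : A h.coeff d 0 = h.coeff 0 := by
    unfold A
    simp [Finset.sum_range_one, hFd1]
  refine ⟨(mkPoly (d + 1) (A h.coeff d), mkPoly d (B h.coeff d)), ⟨?_, ?_, ?_, ?_, ?_⟩, ?_⟩
  · -- h = a₀ + X * b₀
    ext k
    rw [Polynomial.coeff_add]
    rcases k with _ | i
    · rw [Polynomial.mul_coeff_zero, Polynomial.coeff_X_zero, zero_mul, add_zero,
        mkPoly_coeff, if_pos (by omega), hA0]
    · rw [Polynomial.coeff_X_mul, mkPoly_coeff, mkPoly_coeff]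
      by_cases hk : i < d
      · rw [if_pos (by omega), if_pos hk, A_succ]
        have hAB := AB h.coeff d hFd1 i (by omega)
        have := hF (i + 1)
        linarith [AB h.coeff d hFd1 i (by omega)]
      · rw [if_neg (by omega), if_neg hk, add_zero, hF (i + 1) (by omega)]
  · simpa using mkPoly_natDegree_le (d + 1) (A h.coeff d)
  · exact mkPoly_natDegree_le d (B h.coeff d)
  · intro i hi
    rw [mkPoly_coeff, mkPoly_coeff, if_pos (by omega), if_pos (by omega)]
    exact A_symm h.coeff d i hi
  · intro i hi
    rcases Nat.eq_zero_or_pos d with rfl | hd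
    · simp [mkPoly_coeff]
    · rw [mkPoly_coeff, mkPoly_coeff, if_pos (by omega), if_pos (by omega)]
      exact B_symm h.coeff d i hi
  · -- uniqueness
    rintro ⟨a, b⟩ ⟨heq, hda, hdb, hsa, hsb⟩
    have hb_of_ha : ∀ i < d, a.coeff i = A h.coeff d i → b.coeff i = B h.coeff d i := by
      intro i hid ha
      have h1 : b.coeff i = b.coeff (d - 1 - i) := hsb i (by omega)
      have h2 : h.coeff (d - i) = a.coeff (d - i) + b.coeff (d - 1 - i) := by
        calc h.coeff (d - i) = (a + Polynomial.X * b).coeff (d - i) := by rw [← heq]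
          _ = a.coeff (d - i) + (Polynomial.X * b).coeff ((d - 1 - i) + 1) := by
              rw [Polynomial.coeff_add, show d - i = (d - 1 - i) + 1 from by omega]
          _ = a.coeff (d - i) + b.coeff (d - 1 - i) := by rw [Polynomial.coeff_X_mul]
      have h3 : a.coeff i = a.coeff (d - i) := hsa i (by omega)
      have h4 := AB h.coeff d hFd1 i (by omega)
      rw [h1]
      linarith
    have ha_all : ∀ i ≤ d, a.coeff i = A h.coeff d i := by
      intro i
      induction i with
      | zero =>
        intro _
        have h2 : h.coeff 0 = a.coeff 0 + (Polynomial.X * b).coeff 0 := by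
          rw [heq, Polynomial.coeff_add]
        rw [Polynomial.mul_coeff_zero, Polynomial.coeff_X_zero, zero_mul, add_zero] at h2
        rw [hA0]
        exact h2.symm
      | succ i ih =>
        intro hsd
        have hb := hb_of_ha i (by omega) (ih (by omega))
        have h2 : h.coeff (i + 1) = a.coeff (i + 1) + b.coeff i := by
          rw [heq, Polynomial.coeff_add, Polynomial.coeff_X_mul]
        have h4 := AB h.coeff d hFd1 i (by omega)
        rw [A_succ]
        linarith
    have hb_all : ∀ i < d, b.coeff i = B h.coeff d i := fun i hi =>
      hb_of_ha i hi (ha_all i (by omega))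
    have ea : a = mkPoly (d + 1) (A h.coeff d) := by
      ext k
      rw [mkPoly_coeff]
      split_ifs with hk
      · exact ha_all k (by omega)
      · exact Polynomial.coeff_eq_zero_of_natDegree_lt (lt_of_le_of_lt hda (by omega))
    have eb : b = mkPoly d (B h.coeff d) := by
      ext k
      rw [mkPoly_coeff]
      split_ifs with hk
      · exact hb_all k hk
      · by_cases hk2 : d - 1 < k
        · exact Polynomial.coeff_eq_zero_of_natDegree_lt (lt_of_le_of_lt hdb hk2)
        · have hd0 : d = 0 := by omega
          have hk0 : k = 0 := by omega
          subst hd0; subst hk0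
          have h2 : h.coeff 1 = a.coeff 1 + b.coeff 0 := by
            rw [heq, Polynomial.coeff_add, Polynomial.coeff_X_mul]
          have e1 : h.coeff 1 = 0 := hF 1 (by omega)
          have e2 : a.coeff 1 = 0 :=
            Polynomial.coeff_eq_zero_of_natDegree_lt (lt_of_le_of_lt hda Nat.zero_lt_one)
          linarith
      
    exact Prod.ext ea eb
end

section
/- Let $f\in\mathbb{R}[x]$ have degree at most $d$, and define $\mathscr{R}_d(f)(x)=(-1)^d f(-x-1)$. Then there exist unique polynomials $\tilde a,\tilde b$ of degrees at most $d$ and $d-1$ respectively such that $\mathscr{R}_d(\tilde a)=\tilde a$, $\mathscr{R}_{d-1}(\tilde b)=\tilde b$, and $f=\tilde a + x\tilde b$; moreover $\tilde a=(x+1)f - x\,\mathscr{R}_d(f)$ and $\tilde b=\mathscr{R}_d(f)-f$. -/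
open Polynomial

/-- The involution `𝓡_d : f(x) ↦ (-1)^d f(-x-1)` on polynomials of degree at
most `d`. -/
noncomputable def Rop (d : ℕ) (f : Polynomial ℝ) : Polynomial ℝ :=
  Polynomial.C ((-1 : ℝ) ^ d) * f.comp (-(Polynomial.X + 1))

lemma natDeg_n : (-(X + 1) : ℝ[X]).natDegree = 1 := by
  have : (-(X + 1) : ℝ[X]) = -X + C (-1) := by simp; ring
  rw [this]; compute_degree!

lemma n_comp_n : ((-(X + 1) : ℝ[X])).comp (-(X + 1)) = X := by
  simp [neg_comp, add_comp]

lemma Rop_Rop (d : ℕ) (f : ℝ[X]) : Rop d (Rop d f) = f := by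
  simp only [Rop, mul_comp, comp_assoc, n_comp_n, C_comp, comp_X, ← mul_assoc, ← C_mul,
    ← mul_pow]
  norm_num

lemma Rop_natDegree (d : ℕ) (f : ℝ[X]) : (Rop d f).natDegree = f.natDegree := by
  rw [Rop, natDegree_C_mul (by simp [pow_ne_zero]), natDegree_comp, natDeg_n, mul_one]

lemma Rop_leadingCoeff (d : ℕ) (f : ℝ[X]) :
    (Rop d f).leadingCoeff = (-1) ^ (d + f.natDegree) * f.leadingCoeff := by
  rw [Rop, leadingCoeff_mul, leadingCoeff_C,
    leadingCoeff_comp (by rw [natDeg_n]; norm_num)]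
  have : (-(X + 1) : ℝ[X]).leadingCoeff = -1 := by
    have : (-(X + 1) : ℝ[X]) = -(X + C 1) := by simp
    rw [this, leadingCoeff_neg, leadingCoeff_X_add_C]
  rw [this, pow_add]; ring

lemma symm_deg {e : ℕ} {p : ℝ[X]} (hR : Rop e p = p) (h : p.natDegree = e + 1) : False := by
  have h1 : p.leadingCoeff = (-1) ^ (e + p.natDegree) * p.leadingCoeff := by
    conv_lhs => rw [← hR, Rop_leadingCoeff]
  rw [h] at h1
  have he : (-1 : ℝ) ^ (e + (e + 1)) = -1 := by
    have : e + (e + 1) = 2 * e + 1 := by ring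
    rw [this, pow_succ, pow_mul]; norm_num
  rw [he] at h1
  have : p.leadingCoeff = 0 := by linarith
  have := leadingCoeff_eq_zero.mp this
  simp [this] at h

/-- For `f` of degree at most `d` there are unique polynomials `ã, b̃` of
degrees at most `d` and `d-1` with `𝓡_d ã = ã`, `𝓡_{d-1} b̃ = b̃`, and
`f = ã + x b̃`; moreover `ã = (x+1) f - x 𝓡_d f` and `b̃ = 𝓡_d f - f`. -/
theorem R_decomposition (d : ℕ) (f : Polynomial ℝ) (hf : f.natDegree ≤ d) :
    (∃! ab : Polynomial ℝ × Polynomial ℝ,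
      ab.1.natDegree ≤ d ∧ ab.2.natDegree ≤ d - 1 ∧
      Rop d ab.1 = ab.1 ∧ Rop (d - 1) ab.2 = ab.2 ∧
      f = ab.1 + Polynomial.X * ab.2) ∧
    ((Polynomial.X + 1) * f - Polynomial.X * Rop d f).natDegree ≤ d ∧
    (Rop d f - f).natDegree ≤ d - 1 ∧
    Rop d ((Polynomial.X + 1) * f - Polynomial.X * Rop d f) =
      (Polynomial.X + 1) * f - Polynomial.X * Rop d f ∧
    Rop (d - 1) (Rop d f - f) = Rop d f - f ∧
    f = ((Polynomial.X + 1) * f - Polynomial.X * Rop d f) +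
      Polynomial.X * (Rop d f - f) := by
  set g := Rop d f with hg_def
  set a := (X + 1) * f - X * g with ha_def
  set b := g - f with hb_def
  have hkey : C ((-1 : ℝ) ^ d) * g.comp (-(X + 1)) = f := Rop_Rop d f
  have hgc : C ((-1 : ℝ) ^ d) * f.comp (-(X + 1)) = g := rfl
  -- main case split
  rcases Nat.eq_zero_or_pos d with hd0 | hdpos
  · -- d = 0
    subst hd0
    have hfc : f = C (f.coeff 0) := Polynomial.eq_C_of_natDegree_le_zero hf
    have hgf : g = f := by
      rw [hg_def, hfc]
      simp [Rop]
    have hb0 : b = 0 := by rw [hb_def, hgf, sub_self]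
    have haf : a = f := by rw [ha_def, hgf]; ring
    have hRf : Rop 0 f = f := hgf
    refine ⟨⟨(a, b), ⟨by rw [haf]; exact hf, by simp [hb0], by rw [haf]; exact hgf,
        by simp [hb0, Rop], by rw [haf, hb0]; ring⟩, ?_⟩, by rw [haf]; exact hf,
        by simp [hb0], by rw [haf]; exact hgf, by simp [hb0, Rop],
        by rw [haf, hb0]; ring⟩
    rintro ⟨a', b'⟩ ⟨ha', hb', hRa', hRb', hfab⟩
    simp only at ha' hb' hRa' hRb' hfab ⊢
    have hb'0 : b' = 0 := by
      by_contra hb0'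
      have h1 : (X * b').natDegree = 1 + b'.natDegree := by
        rw [natDegree_mul X_ne_zero hb0', natDegree_X]
      have h2 : (X * b').natDegree ≤ 0 := by
        rw [show (X : ℝ[X]) * b' = f - a' by linear_combination -hfab]
        exact le_trans (natDegree_sub_le _ _) (max_le hf ha')
      omega
    have : a' = a := by rw [haf]; linear_combination -hfab - X * hb'0
    rw [this, hb'0, hb0]
  · -- d ≥ 1
    obtain ⟨e, rfl⟩ : ∃ e, d = e + 1 := ⟨d - 1, by omega⟩
    have hse : (e + 1) - 1 = e := rfl
    have hs : (C ((-1 : ℝ) ^ (e + 1)) : ℝ[X]) = -C ((-1 : ℝ) ^ e) := by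
      rw [pow_succ]; simp
    have hbc : C ((-1 : ℝ) ^ e) * b.comp (-(X + 1)) = b := by
      rw [hb_def, sub_comp, mul_sub]
      linear_combination (-1 : ℝ[X]) * hkey + hgc + (g.comp (-(X+1)) - f.comp (-(X+1))) * hs
    have hRb : Rop (e + 1 - 1) b = b := hbc
    have hRa : Rop (e + 1) a = a := by
      show C ((-1 : ℝ) ^ (e + 1)) * a.comp (-(X + 1)) = a
      rw [ha_def, sub_comp, mul_comp, mul_comp, add_comp, X_comp, one_comp]
      linear_combination ((-(X + 1) + 1) : ℝ[X]) * hgc + (X + 1) * hkey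
        - (X + 1) * g.comp (-(X+1)) * hs + X * g.comp (-(X+1)) * hs + g.comp (-(X+1)) * hs
    have hfab0 : f = a + X * b := by rw [ha_def, hb_def]; ring
    have hbdeg : b.natDegree ≤ e + 1 - 1 := by
      rw [hse]
      by_contra hc
      have hle : b.natDegree ≤ e + 1 := le_trans (natDegree_sub_le _ _)
        (by rw [hg_def, Rop_natDegree]; omega)
      exact symm_deg hRb (by rw [hse]; omega)
    have hadeg : a.natDegree ≤ e + 1 := by
      rw [show a = f - X * b by rw [ha_def, hb_def]; ring]
      refine le_trans (natDegree_sub_le _ _) (max_le hf ?_)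
      refine le_trans (natDegree_mul_le) ?_
      rw [natDegree_X]
      rw [hse] at hbdeg
      omega
    refine ⟨⟨(a, b), ⟨hadeg, hbdeg, hRa, hRb, hfab0⟩, ?_⟩, hadeg, hbdeg, hRa, hRb, hfab0⟩
    rintro ⟨a', b'⟩ ⟨ha', hb', hRa', hRb', hfab⟩
    simp only at ha' hb' hRa' hRb' hfab ⊢
    rw [hse] at hb' hRb'
    have hRa'' : C ((-1 : ℝ) ^ (e + 1)) * a'.comp (-(X + 1)) = a' := hRa'
    have hRb'' : C ((-1 : ℝ) ^ e) * b'.comp (-(X + 1)) = b' := hRb'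
    have h1 : g = a' + (X + 1) * b' := by
      rw [hg_def]
      conv_lhs => rw [hfab]
      show C ((-1 : ℝ) ^ (e + 1)) * ((a' + X * b').comp (-(X + 1))) = _
      rw [add_comp, mul_comp, X_comp]
      linear_combination hRa'' - (X + 1) * b'.comp (-(X+1)) * hs + (X + 1) * hRb''
    have hb'eq : b' = b := by rw [hb_def]; linear_combination hfab - h1
    have ha'eq : a' = a := by rw [ha_def]; linear_combination -hfab - X * hb'eq - X * hb_def
    rw [ha'eq, hb'eq]
end

section
/- If $f=\sum_{i=0}^{d_1}g_i\,x^i(x+1)^{d_1-i}$ and $g=\sum_{j=0}^{d_2}h_j\,x^j(x+1)^{d_2-j}$ with all $g_i,h_j\ge 0$, then the diamond product $(f\diamond g)(x)=\sum_{k\ge 0}\frac{f^{(k)}(x)}{k!}\frac{g^{(k)}(x)}{k!}x^k(x+1)^k$ is magic positive of degree $d_1+d_2$, i.e., expressible as $\sum_{i=0}^{d_1+d_2}c_i\,x^i(x+1)^{d_1+d_2-i}$ with all $c_i\ge 0$. -/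
/-!
Magic positivity of degree `D` is membership in the convex cone spanned by the polynomials
`X ^ s * (X + 1) ^ t` with `s + t = D`. These cones multiply, with degrees adding, and
`(X ^ s (X + 1) ^ t)' = s X ^ (s - 1) (X + 1) ^ t + t X ^ s (X + 1) ^ (t - 1)` shows that
differentiation maps the degree-`D` cone into the degree-`(D - 1)` cone. Hence for `k ≤ d₁, d₂`
the `k`-th term of `f ⋄ g` is a nonnegative multiple of a product of cone elements of degrees
`d₁ - k`, `d₂ - k` and `2k`, while for larger `k` it vanishes since `deg f ≤ d₁`, `deg g ≤ d₂`.
-/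

open Polynomial

/-- The diamond product
`(f ⋄ g)(x) = ∑_{k ≥ 0} f^{(k)}(x)/k! ⋅ g^{(k)}(x)/k! ⋅ x^k (x+1)^k`. -/
noncomputable def diamond (f g : Polynomial ℝ) : Polynomial ℝ :=
  ∑ k ∈ Finset.range (f.natDegree + g.natDegree + 1),
    Polynomial.C (((k.factorial : ℝ))⁻¹ * ((k.factorial : ℝ))⁻¹) *
      (Polynomial.derivative^[k] f) * (Polynomial.derivative^[k] g) *
      (Polynomial.X * (Polynomial.X + 1)) ^ k

theorem derivative_pow_mul_pow {R : Type*} [CommSemiring R] (s t : ℕ) :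
    derivative (X ^ s * (X + 1) ^ t : R[X]) =
      s • (X ^ (s - 1) * (X + 1) ^ t) + t • (X ^ s * (X + 1) ^ (t - 1)) := by
  rw [derivative_mul, derivative_X_pow, derivative_pow, derivative_add, derivative_X,
    derivative_one, add_zero, mul_one, C_eq_natCast, C_eq_natCast, nsmul_eq_mul, nsmul_eq_mul]
  ring

section MagicCone

variable {R : Type*} [CommSemiring R] [PartialOrder R] [IsOrderedRing R]

variable (R) in
noncomputable def magicCone (D : ℕ) : PointedCone R R[X] :=
  PointedCone.hull R {p | ∃ s t, s + t = D ∧ p = X ^ s * (X + 1) ^ t}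

variable {D E : ℕ} {p q : R[X]}

theorem pow_mul_pow_mem_magicCone {s t : ℕ} (h : s + t = D) :
    (X ^ s * (X + 1) ^ t : R[X]) ∈ magicCone R D :=
  PointedCone.subset_hull ⟨s, t, h, rfl⟩

theorem mem_magicCone_iff :
    p ∈ magicCone R D ↔ ∃ c : ℕ → R, (∀ i, 0 ≤ c i) ∧
      p = ∑ i ∈ Finset.range (D + 1), C (c i) * X ^ i * (X + 1) ^ (D - i) := by
  constructor
  · intro hp
    induction hp using Submodule.span_induction with
    | mem p hp =>
      obtain ⟨s, t, rfl, rfl⟩ := hp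
      refine ⟨Pi.single s 1, fun i => ?_, ?_⟩
      · rcases eq_or_ne i s with rfl | hi <;> simp [*]
      · rw [Finset.sum_eq_single_of_mem s (by simp)]
        · simp
        · intro i _ hi
          simp [hi]
    | zero => exact ⟨0, fun _ => le_rfl, by simp⟩
    | add p q _ _ hp hq =>
      obtain ⟨c, hc, rfl⟩ := hp
      obtain ⟨e, he, rfl⟩ := hq
      refine ⟨c + e, fun i => add_nonneg (hc i) (he i), ?_⟩
      simp only [Pi.add_apply, C_add, add_mul, Finset.sum_add_distrib]
    | smul a p _ hp =>
      obtain ⟨c, hc, rfl⟩ := hp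
      refine ⟨fun i => a * c i, fun i => mul_nonneg a.2 (hc i), ?_⟩
      rw [← Nonneg.coe_smul, Finset.smul_sum]
      simp only [smul_eq_C_mul, C_mul, mul_assoc]
  · rintro ⟨c, hc, rfl⟩
    refine Submodule.sum_mem _ fun i hi => ?_
    rw [mul_assoc, ← smul_eq_C_mul]
    exact PointedCone.smul_mem _ (hc i)
      (pow_mul_pow_mem_magicCone (by have := Finset.mem_range.1 hi; omega))

theorem mul_mem_magicCone (hp : p ∈ magicCone R D) (hq : q ∈ magicCone R E) :
    p * q ∈ magicCone R (D + E) := by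
  induction hp using Submodule.span_induction with
  | mem p hp =>
    obtain ⟨s, t, rfl, rfl⟩ := hp
    induction hq using Submodule.span_induction with
    | mem q hq =>
      obtain ⟨s', t', rfl, rfl⟩ := hq
      rw [show X ^ s * (X + 1) ^ t * (X ^ s' * (X + 1) ^ t') =
          (X ^ (s + s') * (X + 1) ^ (t + t') : R[X]) by ring]
      exact pow_mul_pow_mem_magicCone (by omega)
    | zero => simp
    | add q q' _ _ hq hq' => simpa [mul_add] using add_mem hq hq'
    | smul a q _ hq => simpa [mul_smul_comm] using Submodule.smul_mem _ a hq
  | zero => simp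
  | add p p' _ _ hp hp' => simpa [add_mul] using add_mem hp hp'
  | smul a p _ hp => simpa [smul_mul_assoc] using Submodule.smul_mem _ a hp

theorem derivative_mem_magicCone (hp : p ∈ magicCone R D) :
    derivative p ∈ magicCone R (D - 1) := by
  induction hp using Submodule.span_induction with
  | mem p hp =>
    obtain ⟨s, t, rfl, rfl⟩ := hp
    rw [derivative_pow_mul_pow]
    refine add_mem ?_ ?_
    · rcases s with _ | s
      · simp
      · exact nsmul_mem (pow_mul_pow_mem_magicCone (by omega)) _
    · rcases t with _ | t
      · simp
      · exact nsmul_mem (pow_mul_pow_mem_magicCone (by omega)) _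
  | zero => simp
  | add p q _ _ hp hq => simpa using add_mem hp hq
  | smul a p _ hp => simpa [derivative_smul] using Submodule.smul_mem _ a hp

theorem iterate_derivative_mem_magicCone (hp : p ∈ magicCone R D) (k : ℕ) :
    derivative^[k] p ∈ magicCone R (D - k) := by
  induction k with
  | zero => simpa using hp
  | succ k ih =>
    rw [Function.iterate_succ_apply', ← Nat.sub_sub]
    exact derivative_mem_magicCone ih

theorem natDegree_le_of_mem_magicCone (hp : p ∈ magicCone R D) : p.natDegree ≤ D := by
  rw [natDegree_le_iff_degree_le, ← mem_degreeLE]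
  suffices magicCone R D ≤ (degreeLE R D).restrictScalars _ from this hp
  refine Submodule.span_le.2 ?_
  rintro _ ⟨s, t, rfl, rfl⟩
  rw [SetLike.mem_coe, Submodule.restrictScalars_mem, mem_degreeLE, ← natDegree_le_iff_degree_le]
  compute_degree

end MagicCone

open Nat in
theorem diamond_term_mem_magicCone {f g : ℝ[X]} {d₁ d₂ : ℕ} (hf : f ∈ magicCone ℝ d₁)
    (hg : g ∈ magicCone ℝ d₂) (k : ℕ) :
    C ((k ! : ℝ)⁻¹ * (k ! : ℝ)⁻¹) * derivative^[k] f * derivative^[k] g * (X * (X + 1)) ^ k ∈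
      magicCone ℝ (d₁ + d₂) := by
  by_cases hk : k ≤ d₁ ∧ k ≤ d₂
  · have hweight : (X * (X + 1)) ^ k ∈ magicCone ℝ (k + k) :=
      mul_pow (X : ℝ[X]) (X + 1) k ▸ pow_mul_pow_mem_magicCone rfl
    have hprod := mul_mem_magicCone (mul_mem_magicCone (iterate_derivative_mem_magicCone hf k)
      (iterate_derivative_mem_magicCone hg k)) hweight
    rw [show d₁ - k + (d₂ - k) + (k + k) = d₁ + d₂ by omega] at hprod
    rw [mul_assoc, mul_assoc, C_mul', ← mul_assoc]
    exact PointedCone.smul_mem _ (by positivity) hprod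
  · rcases not_and_or.mp hk with hk | hk
    · have := (natDegree_le_of_mem_magicCone hf).trans_lt (not_le.mp hk)
      simp [iterate_derivative_eq_zero this]
    · have := (natDegree_le_of_mem_magicCone hg).trans_lt (not_le.mp hk)
      simp [iterate_derivative_eq_zero this]

theorem diamond_mem_magicCone {f g : ℝ[X]} {d₁ d₂ : ℕ} (hf : f ∈ magicCone ℝ d₁)
    (hg : g ∈ magicCone ℝ d₂) : diamond f g ∈ magicCone ℝ (d₁ + d₂) :=
  Submodule.sum_mem _ fun k _ => diamond_term_mem_magicCone hf hg k

/-- If `f` and `g` are magic positive of degrees `d₁` and `d₂`, then `f ⋄ g`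
is magic positive of degree `d₁ + d₂`. -/
theorem diamond_magic_positive (d₁ d₂ : ℕ) (g h : ℕ → ℝ)
    (hg : ∀ i, 0 ≤ g i) (hh : ∀ j, 0 ≤ h j) (f G : Polynomial ℝ)
    (hf : f = ∑ i ∈ Finset.range (d₁ + 1),
      Polynomial.C (g i) * Polynomial.X ^ i * (Polynomial.X + 1) ^ (d₁ - i))
    (hG : G = ∑ j ∈ Finset.range (d₂ + 1),
      Polynomial.C (h j) * Polynomial.X ^ j * (Polynomial.X + 1) ^ (d₂ - j)) :
    ∃ c : ℕ → ℝ, (∀ i, 0 ≤ c i) ∧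
      diamond f G = ∑ i ∈ Finset.range (d₁ + d₂ + 1),
        Polynomial.C (c i) * Polynomial.X ^ i * (Polynomial.X + 1) ^ (d₁ + d₂ - i) :=
  mem_magicCone_iff.1 <|
    diamond_mem_magicCone (mem_magicCone_iff.2 ⟨g, hg, hf⟩) (mem_magicCone_iff.2 ⟨h, hh, hG⟩)
end

section
/- If $f_0,f_1,\dots,f_m$ are real-rooted polynomials such that $f_{i-1}\preceq f_i$ for each $1\le i\le m$ and additionally $f_0\preceq f_m$, then $f_i\preceq f_j$ whenever $i\le j$. -/
open Polynomial

/-- A real polynomial is real-rooted if all its zeros (with multiplicity) are real. -/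
def RealRooted (f : Polynomial ℝ) : Prop :=
  Multiset.card f.roots = f.natDegree

/-- `Interlaces b a` (`b ⪯ a`): the zeros of the real-rooted polynomials `a, b`
interlace, the largest belonging to `a`. -/
def Interlaces (b a : Polynomial ℝ) : Prop :=
  RealRooted a ∧ RealRooted b ∧
  ∃ A B : List ℝ, A.Pairwise (· ≥ ·) ∧ B.Pairwise (· ≥ ·) ∧
    a.roots = (A : Multiset ℝ) ∧ b.roots = (B : Multiset ℝ) ∧
    B.length ≤ A.length ∧ A.length ≤ B.length + 1 ∧
    (∀ (i : ℕ) (hb : i < B.length) (ha : i < A.length), B.get ⟨i, hb⟩ ≤ A.get ⟨i, ha⟩) ∧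
    (∀ (i : ℕ) (ha : i + 1 < A.length) (hb : i < B.length),
      A.get ⟨i + 1, ha⟩ ≤ B.get ⟨i, hb⟩)

/-- The canonical descending list of roots of a real polynomial. -/
noncomputable def rootList (a : Polynomial ℝ) : List ℝ := a.roots.sort (· ≥ ·)

lemma rootList_unique {A : List ℝ} {a : Polynomial ℝ} (hA : A.Pairwise (· ≥ ·))
    (h : a.roots = (A : Multiset ℝ)) : A = rootList a := by
  apply List.Perm.eq_of_pairwise' hA (Multiset.pairwise_sort _ _) ?_
  rw [← Multiset.coe_eq_coe, ← h]
  exact (Multiset.sort_eq _ _).symm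

lemma interlaces_rootList {b a : Polynomial ℝ} (h : Interlaces b a) :
    (rootList b).length ≤ (rootList a).length ∧
    (rootList a).length ≤ (rootList b).length + 1 ∧
    (∀ (i : ℕ) (hb : i < (rootList b).length) (ha : i < (rootList a).length),
      (rootList b).get ⟨i, hb⟩ ≤ (rootList a).get ⟨i, ha⟩) ∧
    (∀ (i : ℕ) (ha : i + 1 < (rootList a).length) (hb : i < (rootList b).length),
      (rootList a).get ⟨i + 1, ha⟩ ≤ (rootList b).get ⟨i, hb⟩) := by
  obtain ⟨-, -, A, B, hAs, hBs, hAr, hBr, h1, h2, h3, h4⟩ := h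
  obtain rfl := rootList_unique hAs hAr
  obtain rfl := rootList_unique hBs hBr
  exact ⟨h1, h2, h3, h4⟩

/-- If `f₀, f₁, …, f_m` are real-rooted with `f_{i-1} ⪯ f_i` for `1 ≤ i ≤ m`
and `f₀ ⪯ f_m`, then `f_i ⪯ f_j` whenever `i ≤ j` (an interlacing sequence). -/
theorem interlacing_sequence (m : ℕ) (f : ℕ → Polynomial ℝ)
    (hrr : ∀ i ≤ m, RealRooted (f i))
    (hchain : ∀ i, 1 ≤ i → i ≤ m → Interlaces (f (i - 1)) (f i))
    (hends : Interlaces (f 0) (f m)) :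
    ∀ i j, i ≤ j → j ≤ m → Interlaces (f i) (f j) := by
  set S : ℕ → List ℝ := fun k => rootList (f k) with hS
  -- step facts from the chain
  have step : ∀ k, k + 1 ≤ m →
      (S k).length ≤ (S (k + 1)).length ∧
      (∀ (l : ℕ) (hb : l < (S k).length) (ha : l < (S (k + 1)).length),
        (S k).get ⟨l, hb⟩ ≤ (S (k + 1)).get ⟨l, ha⟩) := by
    intro k hk
    have h := interlaces_rootList (hchain (k + 1) (by omega) hk)
    simpa using ⟨h.1, h.2.2.1⟩
  -- monotonicity of lengths
  have monolen : ∀ j, j ≤ m → ∀ i, i ≤ j → (S i).length ≤ (S j).length := by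
    intro j
    induction j with
    | zero =>
      intro _ i hi
      obtain rfl : i = 0 := by omega
      exact le_rfl
    | succ j ih =>
      intro hjm i hi
      rcases Nat.lt_or_ge i (j + 1) with h | h
      · exact le_trans (ih (by omega) i (by omega)) (step j hjm).1
      · obtain rfl : i = j + 1 := by omega
        exact le_rfl
  -- monotonicity of roots at each index
  have monoroot : ∀ j, j ≤ m → ∀ i, i ≤ j → ∀ (l : ℕ) (hi : l < (S i).length)
      (hj : l < (S j).length), (S i).get ⟨l, hi⟩ ≤ (S j).get ⟨l, hj⟩ := by
    intro j
    induction j with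
    | zero =>
      intro _ i hi
      obtain rfl : i = 0 := by omega
      intro l h1 h2; exact le_of_eq rfl
    | succ j ih =>
      intro hjm i hi
      rcases Nat.lt_or_ge i (j + 1) with h | h
      · intro l hli hlj1
        have hjl : l < (S j).length := lt_of_lt_of_le hli (monolen j (by omega) i (by omega))
        exact le_trans (ih (by omega) i (by omega) l hli hjl) ((step j hjm).2 l hjl hlj1)
      · obtain rfl : i = j + 1 := by omega
        intro l h1 h2; exact le_of_eq rfl
  -- facts from the ends
  have hend := interlaces_rootList hends
  intro i j hij hjm
  refine ⟨hrr j hjm, hrr i (hij.trans hjm), S j, S i,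
    Multiset.pairwise_sort _ _, Multiset.pairwise_sort _ _,
    (Multiset.sort_eq _ _).symm, (Multiset.sort_eq _ _).symm,
    monolen j hjm i hij, ?_, monoroot j hjm i hij, ?_⟩
  · have h1 : (S j).length ≤ (S m).length := monolen m le_rfl j hjm
    have h2 : (S m).length ≤ (S 0).length + 1 := hend.2.1
    have h3 : (S 0).length ≤ (S i).length := monolen i (hij.trans hjm) 0 (Nat.zero_le _)
    omega
  · intro l ha hb
    have hm1 : l + 1 < (S m).length := lt_of_lt_of_le ha (monolen m le_rfl j hjm)
    have h0 : l < (S 0).length := by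
      have h2 : (S m).length ≤ (S 0).length + 1 := hend.2.1
      omega
    calc (S j).get ⟨l + 1, ha⟩
        ≤ (S m).get ⟨l + 1, hm1⟩ := monoroot m le_rfl j hjm (l + 1) ha hm1
      _ ≤ (S 0).get ⟨l, h0⟩ := hend.2.2.2 l hm1 h0
      _ ≤ (S i).get ⟨l, hb⟩ := monoroot i (hij.trans hjm) 0 (Nat.zero_le _) l h0 hb
end

section
/- Define sequences by $f_{1,0}=1$, $f_{1,1}=3$, $f_{1,2}=10$, and the recursion $f_{k+1,0}=f_{k,0}$, $f_{k+1,1}=3f_{k,0}+4f_{k,1}$, $f_{k+1,2}=10f_{k,0}+26f_{k,1}+17f_{k,2}$. Then for all $k\ge 1$: $f_{k,0}=1$, $f_{k,1}=4^k-1$, $f_{k,2}=17^k-2\cdot 4^k+1$, and consequently $f_{k,1}^2 < f_{k,0}f_{k,2}$. -/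
/-- With `f_{1,0}=1`, `f_{1,1}=3`, `f_{1,2}=10` and the recursion
`f_{k+1,0}=f_{k,0}`, `f_{k+1,1}=3f_{k,0}+4f_{k,1}`,
`f_{k+1,2}=10f_{k,0}+26f_{k,1}+17f_{k,2}`, one has for all `k ≥ 1`:
`f_{k,0}=1`, `f_{k,1}=4^k-1`, `f_{k,2}=17^k-2·4^k+1`, and
`f_{k,1}^2 < f_{k,0} f_{k,2}`. -/
theorem reeve_coefficient_recursion (a b c : ℕ → ℝ)
    (ha1 : a 1 = 1) (hb1 : b 1 = 3) (hc1 : c 1 = 10)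
    (ha : ∀ k, 1 ≤ k → a (k + 1) = a k)
    (hb : ∀ k, 1 ≤ k → b (k + 1) = 3 * a k + 4 * b k)
    (hc : ∀ k, 1 ≤ k → c (k + 1) = 10 * a k + 26 * b k + 17 * c k) :
    ∀ k, 1 ≤ k →
      a k = 1 ∧ b k = 4 ^ k - 1 ∧ c k = 17 ^ k - 2 * 4 ^ k + 1 ∧
      (b k) ^ 2 < a k * c k := by
  have key : ∀ k, 1 ≤ k → a k = 1 ∧ b k = 4 ^ k - 1 ∧ c k = 17 ^ k - 2 * 4 ^ k + 1 := by
    intro k hk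
    induction k with
    | zero => omega
    | succ n ih =>
      rcases Nat.eq_or_lt_of_le hk with h | h
      · simp [← h, ha1, hb1, hc1]; norm_num
      · have hn : 1 ≤ n := by omega
        obtain ⟨h1, h2, h3⟩ := ih hn
        refine ⟨by rw [ha n hn, h1], ?_, ?_⟩
        · rw [hb n hn, h1, h2]; ring
        · rw [hc n hn, h1, h2, h3]; ring
  intro k hk
  obtain ⟨h1, h2, h3⟩ := key k hk
  refine ⟨h1, h2, h3, ?_⟩
  rw [h1, h2, h3, one_mul]
  have h16 : (16 : ℝ) ^ k < 17 ^ k := by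
    apply pow_lt_pow_left₀ (by norm_num) (by norm_num)
    omega
  have h44 : (4:ℝ) ^ k * 4 ^ k = 16 ^ k := by rw [← mul_pow]; norm_num
  nlinarith [h16, h44]
end

section
/- Let $h(x)=x^3+9x^2+3x+1$ (the case $\lambda=6$ of $h=x^3+(3+\lambda)x^2+3x+1$). Its symmetric decomposition with respect to degree $3$ is $a(x)=1+3x+3x^2+x^3=(1+x)^3$ and $b(x)=6x$, both real-rooted. Let $p$ be the cubic polynomial with $\mathscr{W}(p)=h$. Then $\mathscr{W}(p^2)(x)=x^6+162x^5+1239x^4+1836x^3+639x^2+42x+1$, and this polynomial is not real-rooted. -/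
open Polynomial PowerSeries

lemma coeff7 : ∀ k, PowerSeries.coeff k ((1-PowerSeries.X:ℝ⟦X⟧)^7) =
    if k = 0 then 1 else if k = 1 then -7 else if k = 2 then 21 else if k = 3 then -35
      else if k = 4 then 35 else if k = 5 then -21 else if k = 6 then 7
      else if k = 7 then -1 else 0 := by
  have h7 : (PowerSeries.C) 7 = (7:ℝ⟦X⟧) := by simp [map_ofNat]
  have h21 : (PowerSeries.C) 21 = (21:ℝ⟦X⟧) := by simp [map_ofNat]
  have h35 : (PowerSeries.C) 35 = (35:ℝ⟦X⟧) := by simp [map_ofNat]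
  have hpow : (1-PowerSeries.X : ℝ⟦X⟧)^7
      = 1 - PowerSeries.C 7*PowerSeries.X + PowerSeries.C 21*PowerSeries.X^2
        - PowerSeries.C 35*PowerSeries.X^3 + PowerSeries.C 35*PowerSeries.X^4
        - PowerSeries.C 21*PowerSeries.X^5 + PowerSeries.C 7*PowerSeries.X^6
        - PowerSeries.X^7 := by rw [h7, h21, h35]; ring
  intro k
  rw [hpow]
  simp only [map_add, map_sub, PowerSeries.coeff_one, PowerSeries.coeff_C_mul,
    PowerSeries.coeff_X, PowerSeries.coeff_X_pow]
  rcases Nat.lt_or_ge k 8 with hk | hk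
  · interval_cases k <;> norm_num
  · have h0 : ¬(k=0) := by omega
    have h1 : ¬(k=1) := by omega
    have h2 : ¬(k=2) := by omega
    have h3 : ¬(k=3) := by omega
    have h4 : ¬(k=4) := by omega
    have h5 : ¬(k=5) := by omega
    have h6 : ¬(k=6) := by omega
    have h7' : ¬(k=7) := by omega
    simp only [if_neg h0, if_neg h1, if_neg h2, if_neg h3, if_neg h4, if_neg h5, if_neg h6,
      if_neg h7']
    norm_num

lemma wcoeff : ∀ k, (Polynomial.X ^ 6 + 162 * Polynomial.X ^ 5 + 1239 * Polynomial.X ^ 4 +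
      1836 * Polynomial.X ^ 3 + 639 * Polynomial.X ^ 2 + 42 * Polynomial.X + 1 : ℝ[X]).coeff k =
    if k = 0 then 1 else if k = 1 then 42 else if k = 2 then 639 else if k = 3 then 1836
      else if k = 4 then 1239 else if k = 5 then 162 else if k = 6 then 1 else 0 := by
  intro k
  have h162 : ((162:ℝ[X])) = Polynomial.C (162:ℝ) := (map_ofNat Polynomial.C 162).symm
  have h1239 : ((1239:ℝ[X])) = Polynomial.C (1239:ℝ) := (map_ofNat Polynomial.C 1239).symm
  have h1836 : ((1836:ℝ[X])) = Polynomial.C (1836:ℝ) := (map_ofNat Polynomial.C 1836).symm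
  have h639 : ((639:ℝ[X])) = Polynomial.C (639:ℝ) := (map_ofNat Polynomial.C 639).symm
  have h42 : ((42:ℝ[X])) = Polynomial.C (42:ℝ) := (map_ofNat Polynomial.C 42).symm
  have h1 : ((1:ℝ[X])) = Polynomial.C (1:ℝ) := by norm_num
  rw [h162, h1239, h1836, h639, h42, h1]
  simp only [Polynomial.coeff_add, Polynomial.coeff_C_mul, Polynomial.coeff_X_pow,
    Polynomial.coeff_C, Polynomial.coeff_X]
  rcases Nat.lt_or_ge k 7 with hk | hk
  · interval_cases k <;> norm_num
  · have h0 : ¬(k=0) := by omega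
    have h1' : ¬(k=1) := by omega
    have h2 : ¬(k=2) := by omega
    have h3 : ¬(k=3) := by omega
    have h4 : ¬(k=4) := by omega
    have h5 : ¬(k=5) := by omega
    have h6 : ¬(k=6) := by omega
    have h1'' : ¬(1=k) := by omega
    simp only [if_neg h0, if_neg h1', if_neg h1'', if_neg h2, if_neg h3, if_neg h4, if_neg h5,
      if_neg h6]
    norm_num

lemma multiset_card_succ {α : Type*} {s : Multiset α} {n : ℕ} (h : Multiset.card s = n + 1) :
    ∃ x t, s = x ::ₘ t ∧ Multiset.card t = n := by
  have hpos : 0 < Multiset.card s := by omega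
  obtain ⟨x, hx⟩ := Multiset.card_pos_iff_exists_mem.mp hpos
  obtain ⟨t, rfl⟩ := Multiset.exists_cons_of_mem hx
  exact ⟨x, t, rfl, by simpa using h⟩

lemma neg5prod {x1 x2 x3 x4 x5 : ℝ} (h1 : x1 < 0) (h2 : x2 < 0) (h3 : x3 < 0)
    (h4 : x4 < 0) (h5 : x5 < 0) : x1*x2*x3*x4*x5 < 0 := by
  have hA : 0 < x1*x2 := mul_pos_of_neg_of_neg h1 h2
  have hB : 0 < x3*x4 := mul_pos_of_neg_of_neg h3 h4
  have hAB : 0 < (x1*x2)*(x3*x4) := mul_pos hA hB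
  nlinarith [mul_neg_of_pos_of_neg hAB h5]

lemma w_not_realRooted :
    ¬ RealRooted (Polynomial.X ^ 6 + 162 * Polynomial.X ^ 5 + 1239 * Polynomial.X ^ 4 +
      1836 * Polynomial.X ^ 3 + 639 * Polynomial.X ^ 2 + 42 * Polynomial.X + 1 : ℝ[X]) := by
  set w : ℝ[X] := Polynomial.X ^ 6 + 162 * Polynomial.X ^ 5 + 1239 * Polynomial.X ^ 4 +
      1836 * Polynomial.X ^ 3 + 639 * Polynomial.X ^ 2 + 42 * Polynomial.X + 1 with hw
  intro hrr
  have hm : w.Monic := by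
    have : w = Polynomial.X ^ 6 + (162 * Polynomial.X ^ 5 + 1239 * Polynomial.X ^ 4 +
      1836 * Polynomial.X ^ 3 + 639 * Polynomial.X ^ 2 + 42 * Polynomial.X + 1) := by rw [hw]; ring
    rw [this]
    apply Polynomial.monic_X_pow_add
    have hle : (162 * Polynomial.X ^ 5 + 1239 * Polynomial.X ^ 4 +
        1836 * Polynomial.X ^ 3 + 639 * Polynomial.X ^ 2 + 42 * Polynomial.X + 1 : ℝ[X]).degree ≤ 5 := by
      compute_degree
    exact lt_of_le_of_lt hle (by norm_num)
  have hdeg : w.natDegree = 6 := by rw [hw]; compute_degree!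
  have hw0 : w ≠ 0 := hm.ne_zero
  have hc : Multiset.card w.roots = 5 + 1 := by
    have := hrr; unfold RealRooted at this; omega
  obtain ⟨z1, t1, hs1, hc1⟩ := multiset_card_succ hc
  obtain ⟨z2, t2, hs2, hc2⟩ := multiset_card_succ (by omega : Multiset.card t1 = 4 + 1)
  obtain ⟨z3, t3, hs3, hc3⟩ := multiset_card_succ (by omega : Multiset.card t2 = 3 + 1)
  obtain ⟨z4, t4, hs4, hc4⟩ := multiset_card_succ (by omega : Multiset.card t3 = 2 + 1)
  obtain ⟨z5, t5, hs5, hc5⟩ := multiset_card_succ (by omega : Multiset.card t4 = 1 + 1)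
  obtain ⟨z6, t6, hs6, hc6⟩ := multiset_card_succ (by omega : Multiset.card t5 = 0 + 1)
  have ht6 : t6 = 0 := Multiset.card_eq_zero.mp hc6
  subst ht6 hs6 hs5 hs4 hs3 hs2
  have hroots : w.roots = z1 ::ₘ z2 ::ₘ z3 ::ₘ z4 ::ₘ z5 ::ₘ z6 ::ₘ 0 := hs1
  have hsplit : w.Splits := by
    rw [Polynomial.splits_iff_card_roots]; unfold RealRooted at hrr; exact hrr
  have hfac := hsplit.eq_prod_roots_of_monic hm
  rw [hroots] at hfac
  simp only [Multiset.map_cons, Multiset.prod_cons, Multiset.map_zero, Multiset.prod_zero,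
    mul_one] at hfac
  have heval : ∀ x : ℝ, (x-z1)*(x-z2)*(x-z3)*(x-z4)*(x-z5)*(x-z6) =
      x^6+162*x^5+1239*x^4+1836*x^3+639*x^2+42*x+1 := by
    intro x
    have h1 := congrArg (Polynomial.eval x) hfac
    simp only [hw, Polynomial.eval_mul, Polynomial.eval_add, Polynomial.eval_pow,
      Polynomial.eval_sub, Polynomial.eval_X, Polynomial.eval_C, Polynomial.eval_one,
      Polynomial.eval_ofNat] at h1
    linear_combination -h1
  -- all roots negative
  have hneg : ∀ r : ℝ, r ∈ w.roots → r < 0 := by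
    intro r hr
    have hir : Polynomial.eval r w = 0 := (Polynomial.isRoot_of_mem_roots hr)
    by_contra hge
    push_neg at hge
    rw [hw] at hir
    simp only [Polynomial.eval_mul, Polynomial.eval_add, Polynomial.eval_pow,
      Polynomial.eval_X, Polynomial.eval_one, Polynomial.eval_ofNat] at hir
    nlinarith [pow_nonneg hge 6, pow_nonneg hge 5, pow_nonneg hge 4, pow_nonneg hge 3,
      sq_nonneg r, hge]
  have hz1 : z1 < 0 := hneg z1 (by rw [hroots]; simp)
  have hz2 : z2 < 0 := hneg z2 (by rw [hroots]; simp)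
  have hz3 : z3 < 0 := hneg z3 (by rw [hroots]; simp)
  have hz4 : z4 < 0 := hneg z4 (by rw [hroots]; simp)
  have hz5 : z5 < 0 := hneg z5 (by rw [hroots]; simp)
  have hz6 : z6 < 0 := hneg z6 (by rw [hroots]; simp)
  have hE6 : z1*z2*z3*z4*z5*z6 = 1 := by
    linear_combination heval 0
  have hE5 : z1*z2*z3*z4*z5 + z1*z2*z3*z4*z6 + z1*z2*z3*z5*z6 + z1*z2*z4*z5*z6 + z1*z3*z4*z5*z6 + z2*z3*z4*z5*z6 = -42 := by
    linear_combination (-1/20 : ℝ)*heval (-2) + (1/2 : ℝ)*heval (-1) + (1/3 : ℝ)*heval 0 + (-1 : ℝ)*heval 1 + (1/4 : ℝ)*heval 2 + (-1/30 : ℝ)*heval 3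
  have hE4 : z1*z2*z3*z4 + z1*z2*z3*z5 + z1*z2*z3*z6 + z1*z2*z4*z5 + z1*z2*z4*z6 + z1*z2*z5*z6 + z1*z3*z4*z5 + z1*z3*z4*z6 + z1*z3*z5*z6 + z1*z4*z5*z6 + z2*z3*z4*z5 + z2*z3*z4*z6 + z2*z3*z5*z6 + z2*z4*z5*z6 + z3*z4*z5*z6 = 639 := by
    linear_combination (-1/24 : ℝ)*heval (-2) + (2/3 : ℝ)*heval (-1) + (-5/4 : ℝ)*heval 0 + (2/3 : ℝ)*heval 1 + (-1/24 : ℝ)*heval 2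
  have hE3 : z1*z2*z3 + z1*z2*z4 + z1*z2*z5 + z1*z2*z6 + z1*z3*z4 + z1*z3*z5 + z1*z3*z6 + z1*z4*z5 + z1*z4*z6 + z1*z5*z6 + z2*z3*z4 + z2*z3*z5 + z2*z3*z6 + z2*z4*z5 + z2*z4*z6 + z2*z5*z6 + z3*z4*z5 + z3*z4*z6 + z3*z5*z6 + z4*z5*z6 = -1836 := by
    linear_combination (1/24 : ℝ)*heval (-2) + (1/24 : ℝ)*heval (-1) + (-5/12 : ℝ)*heval 0 + (7/12 : ℝ)*heval 1 + (-7/24 : ℝ)*heval 2 + (1/24 : ℝ)*heval 3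
  have hQ : (z2*z3*z4*z5*z6)^3 + (z1*z3*z4*z5*z6)^3 + (z1*z2*z4*z5*z6)^3 + (z1*z2*z3*z5*z6)^3 + (z1*z2*z3*z4*z6)^3 + (z1*z2*z3*z4*z5)^3 = 918 := by
    linear_combination ((z1*z2*z3*z4*z5 + z1*z2*z3*z4*z6 + z1*z2*z3*z5*z6 + z1*z2*z4*z5*z6 + z1*z3*z4*z5*z6 + z2*z3*z4*z5*z6)^2 + (-42:ℝ)*(z1*z2*z3*z4*z5 + z1*z2*z3*z4*z6 + z1*z2*z3*z5*z6 + z1*z2*z4*z5*z6 + z1*z3*z4*z5*z6 + z2*z3*z4*z5*z6) + 1764 - 3*(z1*z2*z3*z4 + z1*z2*z3*z5 + z1*z2*z3*z6 + z1*z2*z4*z5 + z1*z2*z4*z6 + z1*z2*z5*z6 + z1*z3*z4*z5 + z1*z3*z4*z6 + z1*z3*z5*z6 + z1*z4*z5*z6 + z2*z3*z4*z5 + z2*z3*z4*z6 + z2*z3*z5*z6 + z2*z4*z5*z6 + z3*z4*z5*z6)*(z1*z2*z3*z4*z5*z6)) * hE5 + (126*(z1*z2*z3*z4*z5*z6)) *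 hE4 + (3*(z1*z2*z3*z4*z5*z6)^2) * hE3 + (80514 - 5508*((z1*z2*z3*z4*z5*z6) + 1)) * hE6
  have hP1 : (z2*z3*z4*z5*z6)^3 < 0 := Odd.pow_neg (⟨1, by norm_num⟩) (neg5prod hz2 hz3 hz4 hz5 hz6)
  have hP2 : (z1*z3*z4*z5*z6)^3 < 0 := Odd.pow_neg (⟨1, by norm_num⟩) (neg5prod hz1 hz3 hz4 hz5 hz6)
  have hP3 : (z1*z2*z4*z5*z6)^3 < 0 := Odd.pow_neg (⟨1, by norm_num⟩) (neg5prod hz1 hz2 hz4 hz5 hz6)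
  have hP4 : (z1*z2*z3*z5*z6)^3 < 0 := Odd.pow_neg (⟨1, by norm_num⟩) (neg5prod hz1 hz2 hz3 hz5 hz6)
  have hP5 : (z1*z2*z3*z4*z6)^3 < 0 := Odd.pow_neg (⟨1, by norm_num⟩) (neg5prod hz1 hz2 hz3 hz4 hz6)
  have hP6 : (z1*z2*z3*z4*z5)^3 < 0 := Odd.pow_neg (⟨1, by norm_num⟩) (neg5prod hz1 hz2 hz3 hz4 hz5)
  linarith [hQ, hP1, hP2, hP3, hP4, hP5, hP6]

/-- Let `h = x^3+9x^2+3x+1`.  Its symmetric decomposition with respect to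
degree `3` is `a = (1+x)^3`, `b = 6x`, both real-rooted.  If `p` is the cubic
polynomial with `𝒲(p) = h`, then
`𝒲(p²) = x^6+162x^5+1239x^4+1836x^3+639x^2+42x+1`, which is not real-rooted. -/
theorem real_rooted_symmetric_decomposition_not_preserved
    (h a b p w : Polynomial ℝ)
    (hh : h = Polynomial.X ^ 3 + 9 * Polynomial.X ^ 2 + 3 * Polynomial.X + 1)
    (hA : a = (1 + Polynomial.X) ^ 3) (hB : b = 6 * Polynomial.X)
    (hp : p.natDegree = 3)
    (hWp : (PowerSeries.mk fun j => p.eval (j : ℝ)) * (1 - PowerSeries.X) ^ 4 =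
      (h : PowerSeries ℝ))
    (hw : w = Polynomial.X ^ 6 + 162 * Polynomial.X ^ 5 + 1239 * Polynomial.X ^ 4 +
      1836 * Polynomial.X ^ 3 + 639 * Polynomial.X ^ 2 + 42 * Polynomial.X + 1) :
    h = a + Polynomial.X * b ∧
    (∀ i ≤ 3, a.coeff i = a.coeff (3 - i)) ∧
    (∀ i ≤ 2, b.coeff i = b.coeff (2 - i)) ∧
    RealRooted a ∧ RealRooted b ∧
    (PowerSeries.mk fun j => (p ^ 2).eval (j : ℝ)) * (1 - PowerSeries.X) ^ 7 =
      (w : PowerSeries ℝ) ∧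
    ¬ RealRooted w := by
  subst hh hA hB hw
  -- the coefficients of (1-X)^4
  have hcoef : ∀ k, PowerSeries.coeff k ((1-PowerSeries.X:ℝ⟦X⟧)^4) =
      if k = 0 then 1 else if k = 1 then -4 else if k = 2 then 6 else if k = 3 then -4
        else if k = 4 then 1 else 0 := by
    have h4 : (PowerSeries.C) 4 = (4:ℝ⟦X⟧) := by simp [map_ofNat]
    have h6 : (PowerSeries.C) 6 = (6:ℝ⟦X⟧) := by simp [map_ofNat]
    have hpow : (1-PowerSeries.X : ℝ⟦X⟧)^4
        = 1 - PowerSeries.C 4*PowerSeries.X + PowerSeries.C 6*PowerSeries.X^2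
          - PowerSeries.C 4*PowerSeries.X^3 + PowerSeries.X^4 := by rw [h4, h6]; ring
    intro k
    rw [hpow]
    simp only [map_add, map_sub, PowerSeries.coeff_one, PowerSeries.coeff_C_mul,
      PowerSeries.coeff_X, PowerSeries.coeff_X_pow]
    rcases Nat.lt_or_ge k 5 with hk | hk
    · interval_cases k <;> norm_num
    · have h0 : ¬(k=0) := by omega
      have h1 : ¬(k=1) := by omega
      have h2 : ¬(k=2) := by omega
      have h3 : ¬(k=3) := by omega
      have h4' : ¬(k=4) := by omega
      simp only [if_neg h0, if_neg h1, if_neg h2, if_neg h3, if_neg h4']; norm_num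
  -- the coefficients of h
  have hhc : ∀ k, PowerSeries.coeff k
      ((Polynomial.X^3+9*Polynomial.X^2+3*Polynomial.X+1 : ℝ[X]) : PowerSeries ℝ) =
      if k = 0 then 1 else if k = 1 then 3 else if k = 2 then 9 else if k = 3 then 1 else 0 := by
    intro k
    have h9 : ((9:ℝ[X])) = Polynomial.C (9:ℝ) := (map_ofNat Polynomial.C 9).symm
    have h3' : ((3:ℝ[X])) = Polynomial.C (3:ℝ) := (map_ofNat Polynomial.C 3).symm
    have h1' : ((1:ℝ[X])) = Polynomial.C (1:ℝ) := by norm_num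
    rw [Polynomial.coeff_coe, h9, h3', h1']
    simp only [Polynomial.coeff_add, Polynomial.coeff_C_mul, Polynomial.coeff_X_pow,
      Polynomial.coeff_C, Polynomial.coeff_X]
    rcases Nat.lt_or_ge k 4 with hk | hk
    · interval_cases k <;> norm_num
    · have h0 : ¬(k=0) := by omega
      have h1 : ¬(k=1) := by omega
      have h1'' : ¬(1=k) := by omega
      have h2 : ¬(k=2) := by omega
      have h3 : ¬(k=3) := by omega
      simp only [if_neg h0, if_neg h1, if_neg h1'', if_neg h2, if_neg h3]
      norm_num
  -- values of p at 0,1,2,3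
  have key : ∀ n, ∑ k ∈ Finset.range (n+1),
      p.eval ((k:ℕ):ℝ) * PowerSeries.coeff (n - k) ((1-PowerSeries.X:ℝ⟦X⟧)^4) =
      (if n = 0 then (1:ℝ) else if n = 1 then 3 else if n = 2 then 9 else if n = 3 then 1
        else 0) := by
    intro n
    have hn := congrArg (PowerSeries.coeff n) hWp
    rw [PowerSeries.coeff_mul, Finset.Nat.sum_antidiagonal_eq_sum_range_succ_mk, hhc] at hn
    simpa using hn
  have e0 := key 0
  have e1 := key 1
  have e2 := key 2
  have e3 := key 3
  simp only [Finset.sum_range_succ, Finset.sum_range_zero, hcoef] at e0 e1 e2 e3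
  norm_num at e0 e1 e2 e3
  -- the explicit formula for p
  have hev := fun x : ℝ => Polynomial.eval_eq_sum_range' (by omega : p.natDegree < 4) x
  have v0 := hev ((0:ℕ):ℝ)
  have v1 := hev ((1:ℕ):ℝ)
  have v2 := hev ((2:ℕ):ℝ)
  have v3 := hev ((3:ℕ):ℝ)
  simp only [Finset.sum_range_succ, Finset.sum_range_zero] at v0 v1 v2 v3
  norm_num at v0 v1 v2 v3
  have hc0 : p.coeff 0 = 1 := by
    rw [v0] at e0; linarith
  have hc1 : p.coeff 1 = 5/3 := by
    rw [v0] at e0; rw [v1] at e1; rw [v2] at e2; rw [v3] at e3; linarith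
  have hc2 : p.coeff 2 = 2 := by
    rw [v0] at e0; rw [v1] at e1; rw [v2] at e2; rw [v3] at e3; linarith
  have hc3 : p.coeff 3 = 7/3 := by
    rw [v0] at e0; rw [v1] at e1; rw [v2] at e2; rw [v3] at e3; linarith
  have hq : ∀ x : ℝ, p.eval x = 1 + 5/3*x + 2*x^2 + 7/3*x^3 := by
    intro x
    rw [hev x]
    simp only [Finset.sum_range_succ, Finset.sum_range_zero, hc0, hc1, hc2, hc3]
    ring
  refine ⟨by ring, ?_, ?_, ?_, ?_, ?_, w_not_realRooted⟩
  · -- symmetry of a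
    have haC : ((1 + Polynomial.X : ℝ[X])^3) = Polynomial.C 1 + Polynomial.C 3 * Polynomial.X
        + Polynomial.C 3 * Polynomial.X^2 + Polynomial.X^3 := by
      have h3 : Polynomial.C (3:ℝ) = 3 := map_ofNat _ 3
      have h1 : Polynomial.C (1:ℝ) = 1 := map_one _
      rw [h3, h1]; ring
    intro i hi
    interval_cases i <;>
      norm_num [haC, Polynomial.coeff_add, Polynomial.coeff_C_mul, Polynomial.coeff_X_pow,
        Polynomial.coeff_C, Polynomial.coeff_X, Polynomial.coeff_one]
  · -- symmetry of b
    have hbC : ((6 * Polynomial.X : ℝ[X])) = Polynomial.C 6 * Polynomial.X := by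
      have h6 : Polynomial.C (6:ℝ) = 6 := map_ofNat _ 6
      rw [h6]
    intro i hi
    interval_cases i <;>
      norm_num [hbC, Polynomial.coeff_C_mul, Polynomial.coeff_X, Polynomial.coeff_one]
  · -- a real-rooted
    have e : (1 + Polynomial.X : ℝ[X]) ^ 3 = (Polynomial.X - Polynomial.C (-1)) ^ 3 := by
      simp [sub_neg_eq_add]; ring
    unfold RealRooted
    rw [e, roots_pow, roots_X_sub_C]
    have hd : (Polynomial.X + 1 : ℝ[X]).natDegree = 1 := by
      simpa using natDegree_X_add_C (1:ℝ)
    simp [natDegree_pow, natDegree_X_sub_C, hd]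
  · -- b real-rooted
    unfold RealRooted
    have h6 : (6 * Polynomial.X : ℝ[X]) = Polynomial.C 6 * Polynomial.X := by
      have : Polynomial.C (6:ℝ) = 6 := map_ofNat _ 6
      rw [this]
    rw [h6, roots_C_mul _ (by norm_num : (6:ℝ) ≠ 0), roots_X]
    simp
  · -- the power series identity for p^2
    have hq2 : ∀ x:ℝ, (p^2).eval x = (1 + 5/3*x + 2*x^2 + 7/3*x^3)^2 := by
      intro x; rw [Polynomial.eval_pow, hq x]
    ext n
    rw [mul_comm, PowerSeries.coeff_mul, Finset.Nat.sum_antidiagonal_eq_sum_range_succ_mk,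
      Polynomial.coeff_coe, wcoeff]
    rcases Nat.lt_or_ge n 7 with hn | hn
    · interval_cases n <;>
        simp only [Finset.sum_range_succ, Finset.sum_range_zero, coeff7, PowerSeries.coeff_mk] <;>
        norm_num [hq2]
    · obtain ⟨m, rfl⟩ : ∃ m, n = m + 7 := ⟨n - 7, by omega⟩
      have hzero : ∀ k ∈ Finset.range (m+7+1), k ∉ Finset.range 8 →
          PowerSeries.coeff k ((1-PowerSeries.X:ℝ⟦X⟧)^7) *
            PowerSeries.coeff (m+7-k) (PowerSeries.mk fun j => (p^2).eval (j:ℝ)) = 0 := by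
        intro k _ hk8
        have hk : 8 ≤ k := by simpa [Finset.mem_range] using hk8
        rw [coeff7]
        have h0 : ¬(k=0) := by omega
        have h1 : ¬(k=1) := by omega
        have h2 : ¬(k=2) := by omega
        have h3 : ¬(k=3) := by omega
        have h4 : ¬(k=4) := by omega
        have h5 : ¬(k=5) := by omega
        have h6 : ¬(k=6) := by omega
        have h7 : ¬(k=7) := by omega
        simp only [if_neg h0, if_neg h1, if_neg h2, if_neg h3, if_neg h4, if_neg h5, if_neg h6,
          if_neg h7, zero_mul]
      have hsub : Finset.range 8 ⊆ Finset.range (m+7+1) := Finset.range_subset_range.mpr (by omega)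
      rw [← Finset.sum_subset hsub hzero]
      have d1 : m + 7 - 1 = m + 6 := by omega
      have d2 : m + 7 - 2 = m + 5 := by omega
      have d3 : m + 7 - 3 = m + 4 := by omega
      have d4 : m + 7 - 4 = m + 3 := by omega
      have d5 : m + 7 - 5 = m + 2 := by omega
      have d6 : m + 7 - 6 = m + 1 := by omega
      have d7 : m + 7 - 7 = m := by omega
      have r0 : ¬(m+7=0) := by omega
      have r1 : ¬(m+7=1) := by omega
      have r2 : ¬(m+7=2) := by omega
      have r3 : ¬(m+7=3) := by omega
      have r4 : ¬(m+7=4) := by omega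
      have r5 : ¬(m+7=5) := by omega
      have r6 : ¬(m+7=6) := by omega
      simp only [Finset.sum_range_succ, Finset.sum_range_zero, coeff7, PowerSeries.coeff_mk,
        d1, d2, d3, d4, d5, d6, d7, if_neg r0, if_neg r1, if_neg r2, if_neg r3, if_neg r4,
        if_neg r5, if_neg r6, Nat.sub_zero, hq2]
      norm_num
      ring
end
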